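/- arXiv:0811.2772 — 5 statements merged into one kernel-verified Lean document; each statement's English description precedes it below -/
import Mathlib

section
/- For σ > 0 and complex z with |arg z| < π/2, one has e^{-z} = (1/2πi) ∫_{σ-i∞}^{σ+i∞} z^{-t} Γ(t) dt, where the integral is along the vertical line Re t = σ. -/
/-!
For `Re z > 0` the Mellin transform of `x ↦ e^{-zx}` is `z^{-s} Γ(s)`: for real `z` this is Euler's
integral after rescaling, and both sides are holomorphic in `z` on the right half-plane. Mellin
inversion at `x = 1` then gives the formula, once `s ↦ z^{-s} Γ(s)` is known to be integrable on
the line `Re s = σ`. That integrability comes from the same identity: with `w = e^{±iθ}` and the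
trivial bound on the Mellin integral, `|Γ(σ + iy)| ≤ (cos θ)^{-σ} Γ(σ) e^{-θ|y|}` for every
`θ < π/2`, which beats the growth `e^{|arg z| |y|}` of `|z^{-σ-iy}|`.
-/

open Complex Real MeasureTheory Set Filter Topology

lemma Real.integrableOn_rpow_mul_exp_neg_mul_Ioi {a r : ℝ} (ha : 0 < a) (hr : 0 < r) :
    IntegrableOn (fun x : ℝ ↦ x ^ (a - 1) * rexp (-(r * x))) (Ioi 0) :=
  Integrable.of_integral_ne_zero <| by
    rw [Real.integral_rpow_mul_exp_neg_mul_Ioi ha hr]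
    exact (mul_pos (by positivity) (Real.Gamma_pos_of_pos ha)).ne'

lemma integrable_exp_neg_mul_abs {δ : ℝ} (hδ : 0 < δ) :
    Integrable (fun y : ℝ ↦ rexp (-(δ * |y|))) :=
  Integrable.of_integral_ne_zero <| by
    simp_rw [← neg_mul]
    rw [integral_comp_abs (f := fun y ↦ rexp (-δ * y)), integral_exp_mul_Ioi (by linarith)]
    simp [hδ.ne']

namespace Complex

lemma norm_ofReal_cpow_mul_exp_neg_mul {x : ℝ} (hx : 0 < x) (s w : ℂ) :
    ‖(x : ℂ) ^ s * cexp (-(w * x))‖ = x ^ s.re * rexp (-(w.re * x)) := by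
  simp [norm_cpow_eq_rpow_re_of_pos hx, norm_exp]

lemma mellinConvergent_exp_neg_mul {s w : ℂ} (hs : 0 < s.re) (hw : 0 < w.re) :
    MellinConvergent (fun x : ℝ ↦ cexp (-(w * x))) s := by
  refine (integrableOn_rpow_mul_exp_neg_mul_Ioi hs hw).mono' (by fun_prop) ?_
  filter_upwards [self_mem_ae_restrict measurableSet_Ioi] with x hx
  rw [smul_eq_mul, norm_ofReal_cpow_mul_exp_neg_mul hx, sub_re, one_re]

lemma hasDerivAt_ofReal_cpow_mul_exp_neg_mul {x : ℝ} (hx : 0 < x) (s w : ℂ) :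
    HasDerivAt (fun w : ℂ ↦ (x : ℂ) ^ (s - 1) * cexp (-(w * x)))
      (-((x : ℂ) ^ (s + 1 - 1) * cexp (-(w * x)))) w := by
  refine ((((hasDerivAt_id w).mul_const (x : ℂ)).fun_neg.cexp).const_mul _).congr_deriv ?_
  rw [show s + 1 - 1 = s - 1 + 1 by ring, cpow_add _ _ (ofReal_ne_zero.2 hx.ne'), cpow_one]
  simp only [id, one_mul]
  ring

lemma differentiableOn_mellin_exp_neg_mul {s : ℂ} (hs : 0 < s.re) :
    DifferentiableOn ℂ (fun w ↦ mellin (fun x : ℝ ↦ cexp (-(w * x))) s) {w | 0 < w.re} := by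
  intro w₀ (hw₀ : 0 < w₀.re)
  have hnhds : {w : ℂ | w₀.re / 2 < w.re} ∈ 𝓝 w₀ :=
    (isOpen_lt continuous_const continuous_re).mem_nhds (half_lt_self hw₀)
  refine (hasDerivAt_integral_of_dominated_loc_of_deriv_le hnhds
    (μ := volume.restrict (Ioi 0)) (F := fun w (x : ℝ) ↦ (x : ℂ) ^ (s - 1) • cexp (-(w * x)))
    (F' := fun w (x : ℝ) ↦ -((x : ℂ) ^ (s + 1 - 1) * cexp (-(w * x))))
    (bound := fun x ↦ x ^ ((s + 1).re - 1) * rexp (-(w₀.re / 2 * x)))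
    ?_ (mellinConvergent_exp_neg_mul hs hw₀) (by fun_prop) ?_
    (integrableOn_rpow_mul_exp_neg_mul_Ioi (by rw [add_re, one_re]; linarith) (half_pos hw₀)) ?_
    ).2.differentiableAt.differentiableWithinAt
  · filter_upwards [hnhds] with w (hw : w₀.re / 2 < w.re)
    exact (mellinConvergent_exp_neg_mul hs (by linarith)).aestronglyMeasurable
  · filter_upwards [self_mem_ae_restrict measurableSet_Ioi] with x (hx : 0 < x) w
      (hw : w₀.re / 2 < w.re)
    rw [norm_neg, norm_ofReal_cpow_mul_exp_neg_mul hx, sub_re, one_re]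
    gcongr
  · filter_upwards [self_mem_ae_restrict measurableSet_Ioi] with x (hx : 0 < x) w _
    simpa only [smul_eq_mul] using hasDerivAt_ofReal_cpow_mul_exp_neg_mul hx s w

lemma frequently_ofReal_pos_nhdsNE_one :
    ∃ᶠ w in 𝓝[≠] (1 : ℂ), ∃ r : ℝ, 0 < r ∧ w = (r : ℂ) := by
  have h : Tendsto ofReal (𝓝[>] (1 : ℝ)) (𝓝[≠] (1 : ℂ)) := by
    refine tendsto_nhdsWithin_iff.2 ⟨?_, ?_⟩
    · simpa using (continuous_ofReal.tendsto 1).mono_left nhdsWithin_le_nhds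
    · filter_upwards [self_mem_nhdsWithin] with r (hr : 1 < r)
      simp [hr.ne']
  refine h.frequently (Eventually.frequently ?_)
  filter_upwards [self_mem_nhdsWithin] with r (hr : 1 < r)
  exact ⟨r, by linarith, rfl⟩

lemma mellin_exp_neg_mul {s w : ℂ} (hs : 0 < s.re) (hw : 0 < w.re) :
    mellin (fun x : ℝ ↦ cexp (-(w * x))) s = w ^ (-s) * Gamma s := by
  have hU : IsOpen {w : ℂ | 0 < w.re} := isOpen_lt continuous_const continuous_re
  have hrhs : AnalyticOnNhd ℂ (fun w : ℂ ↦ w ^ (-s) * Gamma s) {w | 0 < w.re} :=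
    DifferentiableOn.analyticOnNhd (fun w hw ↦
      ((differentiableAt_id.cpow_const (Or.inl hw)).mul_const _).differentiableWithinAt) hU
  refine ((differentiableOn_mellin_exp_neg_mul hs).analyticOnNhd hU)
    |>.eqOn_of_preconnected_of_frequently_eq hrhs (convex_halfSpace_re_gt 0).isPreconnected
      (z₀ := 1) (by simp) ?_ hw
  refine frequently_ofReal_pos_nhdsNE_one.mono ?_
  rintro _ ⟨r, hr, rfl⟩
  simp only [mellin, smul_eq_mul]
  rw [integral_cpow_mul_exp_neg_mul_Ioi hs hr, one_div,
    inv_cpow _ _ (by simp [arg_ofReal_of_nonneg hr.le, pi_ne_zero.symm]), cpow_neg]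

lemma norm_cpow_neg_mul_Gamma_le {s w : ℂ} (hs : 0 < s.re) (hw : 0 < w.re) :
    ‖w ^ (-s) * Gamma s‖ ≤ (1 / w.re) ^ s.re * Real.Gamma s.re := by
  rw [← mellin_exp_neg_mul hs hw, ← Real.integral_rpow_mul_exp_neg_mul_Ioi hs hw]
  refine (norm_integral_le_integral_norm _).trans_eq
    (setIntegral_congr_fun measurableSet_Ioi fun x hx ↦ ?_)
  rw [smul_eq_mul, norm_ofReal_cpow_mul_exp_neg_mul hx, sub_re, one_re]

lemma norm_Gamma_le_mul_exp_neg_mul_im {s : ℂ} (hs : 0 < s.re) {θ : ℝ} (hθ : |θ| < π / 2) :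
    ‖Gamma s‖ ≤ (1 / Real.cos θ) ^ s.re * Real.Gamma s.re * rexp (-(θ * s.im)) := by
  obtain ⟨hθl, hθr⟩ := abs_lt.1 hθ
  have hre : (cexp (θ * I)).re = Real.cos θ := exp_ofReal_mul_I_re θ
  have harg : (cexp (θ * I)).arg = θ :=
    (arg_exp_mul_I θ).trans ((toIocMod_eq_self _).2 ⟨by linarith, by linarith⟩)
  have hnorm : ‖cexp (θ * I) ^ (-s)‖ = rexp (θ * s.im) := by
    rw [norm_cpow_of_ne_zero (exp_ne_zero _), norm_exp_ofReal_mul_I, harg, Real.one_rpow,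
      neg_im, mul_neg, Real.exp_neg, one_div, inv_inv]
  have h := norm_cpow_neg_mul_Gamma_le hs (hre ▸ Real.cos_pos_of_mem_Ioo ⟨hθl, hθr⟩)
  rw [norm_mul, hnorm, hre, mul_comm] at h
  rwa [Real.exp_neg, ← div_eq_mul_inv, le_div_iff₀ (exp_pos _)]

lemma norm_Gamma_le_mul_exp_neg_mul_abs_im {s : ℂ} (hs : 0 < s.re) {θ : ℝ} (hθ₀ : 0 ≤ θ)
    (hθ : θ < π / 2) :
    ‖Gamma s‖ ≤ (1 / Real.cos θ) ^ s.re * Real.Gamma s.re * rexp (-(θ * |s.im|)) := by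
  rcases le_total 0 s.im with h | h
  · simpa [abs_of_nonneg h] using
      norm_Gamma_le_mul_exp_neg_mul_im hs (θ := θ) (by rwa [abs_of_nonneg hθ₀])
  · simpa [abs_of_nonpos h] using
      norm_Gamma_le_mul_exp_neg_mul_im hs (θ := -θ) (by rwa [abs_neg, abs_of_nonneg hθ₀])

lemma norm_cpow_neg_mul_Gamma_le_mul_exp_neg_mul_abs_im {z s : ℂ} (hz : z ≠ 0) (hs : 0 < s.re)
    {θ : ℝ} (hθ₀ : 0 ≤ θ) (hθ : θ < π / 2) :
    ‖z ^ (-s) * Gamma s‖ ≤ ‖z‖ ^ (-s.re) * ((1 / Real.cos θ) ^ s.re * Real.Gamma s.re) *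
      rexp (-((θ - |z.arg|) * |s.im|)) := by
  have harg : rexp (z.arg * s.im) ≤ rexp (|z.arg| * |s.im|) :=
    exp_le_exp.2 (abs_mul z.arg s.im ▸ le_abs_self _)
  calc ‖z ^ (-s) * Gamma s‖ = ‖z‖ ^ (-s.re) * rexp (z.arg * s.im) * ‖Gamma s‖ := by
        rw [norm_mul, norm_cpow_of_ne_zero hz, neg_re, neg_im, mul_neg, Real.exp_neg,
          div_inv_eq_mul]
    _ ≤ ‖z‖ ^ (-s.re) * rexp (|z.arg| * |s.im|) *
        ((1 / Real.cos θ) ^ s.re * Real.Gamma s.re * rexp (-(θ * |s.im|))) := by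
      gcongr
      exact norm_Gamma_le_mul_exp_neg_mul_abs_im hs hθ₀ hθ
    _ = _ := by
      rw [show -((θ - |z.arg|) * |s.im|) = |z.arg| * |s.im| + -(θ * |s.im|) by ring,
        Real.exp_add]
      ring

lemma verticalIntegrable_cpow_neg_mul_Gamma {z : ℂ} (hz : z ≠ 0) (harg : |z.arg| < π / 2)
    {σ : ℝ} (hσ : 0 < σ) : VerticalIntegrable (fun s ↦ z ^ (-s) * Gamma s) σ := by
  obtain ⟨θ, hargθ, hθ⟩ := exists_between harg
  have hcont : Continuous fun y : ℝ ↦ z ^ (-(σ + y * I)) * Gamma (σ + y * I) := by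
    refine .mul (.const_cpow (by fun_prop) (.inl hz)) (continuous_iff_continuousAt.2 fun y ↦ ?_)
    refine (continuousAt_Gamma _ fun m h ↦ ?_).comp (by fun_prop)
    have := congrArg re h
    simp only [add_re, ofReal_re, mul_re, I_re, I_im, ofReal_im, neg_re, natCast_re] at this
    linarith [m.cast_nonneg (α := ℝ)]
  refine ((integrable_exp_neg_mul_abs (sub_pos.2 hargθ)).const_mul
    (‖z‖ ^ (-σ) * ((1 / Real.cos θ) ^ σ * Real.Gamma σ))).mono'
    hcont.aestronglyMeasurable (ae_of_all _ fun y ↦ ?_)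
  simpa using norm_cpow_neg_mul_Gamma_le_mul_exp_neg_mul_abs_im hz (s := σ + y * I) (by simpa)
    ((abs_nonneg _).trans hargθ.le) hθ

end Complex

/-- Mellin–Barnes representation of the exponential: for `σ > 0` and `z ≠ 0` with
`|arg z| < π/2`,
`e^{-z} = (1/2πi) ∫_{σ-i∞}^{σ+i∞} z^{-t} Γ(t) dt`
where the contour is the vertical line `Re t = σ` (parametrized by `t = σ + iy`,
`dt = i dy`). -/
theorem exp_neg_eq_mellin_barnes (σ : ℝ) (hσ : 0 < σ) (z : ℂ) (hz : z ≠ 0)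
    (harg : |z.arg| < π / 2) :
    Complex.exp (-z)
      = (2 * π * I)⁻¹ *
        ∫ y : ℝ, z ^ (-((σ : ℂ) + y * I)) * Complex.Gamma ((σ : ℂ) + y * I) * I := by
  have hzre : 0 < z.re := (abs_arg_lt_pi_div_two_iff.1 harg).resolve_right hz
  set f : ℝ → ℂ := fun x ↦ cexp (-(z * x))
  have hmellin (y : ℝ) : mellin f (σ + y * I) = z ^ (-(σ + y * I)) * Gamma (σ + y * I) :=
    mellin_exp_neg_mul (by simpa) hzre
  have hinv := mellinInv_mellin_eq σ f one_pos (mellinConvergent_exp_neg_mul (by simpa) hzre)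
    ((verticalIntegrable_cpow_neg_mul_Gamma hz harg hσ).congr
      (ae_of_all _ fun y ↦ (hmellin y).symm))
    (by fun_prop)
  simp only [mellinInv, hmellin, ofReal_one, one_cpow, one_smul, f, mul_one] at hinv
  rw [← hinv, integral_mul_const, real_smul]
  generalize ∫ y : ℝ, z ^ (-(σ + y * I)) * Gamma (σ + y * I) = X
  push_cast
  field_simp
end

section
/- For s ≥ 1, 1 ≤ j ≤ s, real σ > max(μ₀, s) where ζ_Λ(t) = ∑_{λ∈Λ} λ^{-t} converges absolutely for Re t > μ₀, and 0 < a, one has ∑_{λ∈Λ} e^{-ajλ}/(1-e^{-aλ})^s = (1/2πi) ∫_{σ-i∞}^{σ+i∞} a^{-t} ζ_Λ(t) ζ_B^{(s)}(t,j) Γ(t) dt, where ζ_B^{(s)}(t,j) = ∑_{l≥0} C(l+s-1,s-1)(l+j)^{-t} is the s-dimensional Barnes zeta function. -/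
/-!
Expanding `(1 - e^{-aλ})^{-s}` binomially, the left side is the exponential series
`∑_{λ,k} C(k+s-1, s-1) e^{-aλ(k+j)}`, i.e. `∑ cᵢ e^{-pᵢ a}` with frequencies `pᵢ = λ(k+j)`.
The Mellin transform of such a series with `cᵢ ≥ 0` is computed term by term (monotone
convergence) as `Γ(t) ∑ cᵢ pᵢ^{-t}`, and this Dirichlet series factors as `ζ_Λ(t) ζ_B^{(s)}(t,j)`.
Mellin inversion at `a` then gives the formula; its vertical integrability hypothesis holds since
the Dirichlet series is bounded on `Re t = σ` while `Γ(t + 2) = t (t + 1) Γ(t)` gives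
`|Γ(σ + iy)| = O(1 / (1 + y²))`.
-/

open Complex Real MeasureTheory Set Filter

lemma Real.exp_neg_le_rpow_mul_rpow_neg {σ u : ℝ} (hσ : 0 < σ) (hu : 0 < u) :
    rexp (-u) ≤ σ ^ σ * u ^ (-σ) := by
  have h : (u / σ) ^ σ ≤ rexp u :=
    calc (u / σ) ^ σ ≤ rexp (u / σ) ^ σ := by
          gcongr
          linarith [add_one_le_exp (u / σ)]
      _ = rexp u := by rw [← Real.exp_mul, div_mul_cancel₀ _ hσ.ne']
  rw [Real.exp_neg, Real.rpow_neg hu.le, ← div_eq_mul_inv, ← inv_div,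
    ← Real.div_rpow hu.le hσ.le]
  exact inv_anti₀ (by positivity) h

lemma integrable_tsum_of_nonneg {α ι : Type*} [MeasurableSpace α] [Countable ι] {μ : Measure α}
    {F : ι → α → ℝ} (hF : ∀ i, Integrable (F i) μ) (hF_nonneg : ∀ i, 0 ≤ᵐ[μ] F i)
    (hsum : Summable fun i => ∫ x, F i x ∂μ) :
    Integrable (fun x => ∑' i, F i x) μ := by
  have hmeas : ∀ i, AEMeasurable (fun x => ENNReal.ofReal (F i x)) μ :=
    fun i => (hF i).aemeasurable.ennreal_ofReal
  have hfin : ∫⁻ x, ∑' i, ENNReal.ofReal (F i x) ∂μ ≠ ⊤ := by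
    rw [lintegral_tsum hmeas, ← tsum_congr fun i =>
      ofReal_integral_eq_lintegral_ofReal (hF i) (hF_nonneg i),
      ← ENNReal.ofReal_tsum_of_nonneg (fun i => integral_nonneg_of_ae (hF_nonneg i)) hsum]
    exact ENNReal.ofReal_ne_top
  refine (integrable_toReal_of_lintegral_ne_top (AEMeasurable.tsum hmeas) hfin).congr ?_
  filter_upwards [ae_all_iff.mpr hF_nonneg] with x hx
  rw [ENNReal.tsum_toReal_eq fun i => ENNReal.ofReal_ne_top]
  exact tsum_congr fun i => ENNReal.toReal_ofReal (hx i)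

section Gamma

variable {σ : ℝ}

lemma Complex.norm_Gamma_le_Gamma_re {s : ℂ} (hs : 0 < s.re) : ‖Gamma s‖ ≤ Real.Gamma s.re := by
  rw [Gamma_eq_integral hs, Real.Gamma_eq_integral hs, GammaIntegral]
  refine norm_integral_le_of_norm_le (Real.GammaIntegral_convergent hs) ?_
  filter_upwards [ae_restrict_mem measurableSet_Ioi] with x hx
  rw [norm_mul, norm_cpow_eq_rpow_re_of_pos hx]
  simp [norm_exp]

lemma norm_Gamma_vertical_le (hσ : 0 < σ) (y : ℝ) :
    ‖Gamma (σ + y * I)‖ ≤ Real.Gamma (σ + 2) / (min σ 1 * (1 + y ^ 2)) := by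
  set t : ℂ := σ + y * I
  have ht : t ≠ 0 := fun h => by simpa [t, hσ.ne'] using congrArg re h
  have ht1 : t + 1 ≠ 0 := fun h => by
    have := congrArg re h
    simp [t] at this
    linarith
  have hrec : Gamma (t + 2) = (t + 1) * t * Gamma t := by
    rw [show t + 2 = t + 1 + 1 by ring, Gamma_add_one _ ht1, Gamma_add_one _ ht, mul_assoc]
  have hlow : min σ 1 * (1 + y ^ 2) ≤ ‖t + 1‖ * ‖t‖ := by
    have h1 : min σ 1 ≤ σ := min_le_left _ _
    have h2 : min σ 1 ≤ 1 := min_le_right _ _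
    have h0 : 0 < min σ 1 := lt_min hσ one_pos
    rw [← pow_le_pow_iff_left₀ (by positivity) (by positivity) two_ne_zero, mul_pow, mul_pow,
      Complex.sq_norm, Complex.sq_norm, normSq_apply, normSq_apply]
    simp only [t, add_re, add_im, ofReal_re, ofReal_im, mul_re, mul_im, I_re, I_im, one_re,
      one_im, mul_zero, mul_one, sub_zero, add_zero, zero_add]
    have hA : min σ 1 ^ 2 * (1 + y ^ 2) ≤ σ * σ + y * y := by
      nlinarith [mul_le_mul h1 h1 h0.le hσ.le, mul_le_mul h2 h2 h0.le zero_le_one, sq_nonneg y]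
    have hB : 1 + y ^ 2 ≤ (σ + 1) * (σ + 1) + y * y := by nlinarith
    nlinarith [mul_le_mul hA hB (by positivity)
      (add_nonneg (mul_self_nonneg σ) (mul_self_nonneg y))]
  have hnum : ‖Gamma (t + 2)‖ ≤ Real.Gamma (σ + 2) := by
    simpa [t] using norm_Gamma_le_Gamma_re (s := t + 2) (by simp [t]; linarith)
  rw [le_div_iff₀ (by positivity)]
  calc ‖Gamma t‖ * (min σ 1 * (1 + y ^ 2)) ≤ ‖Gamma t‖ * (‖t + 1‖ * ‖t‖) := by gcongr
    _ = ‖Gamma (t + 2)‖ := by rw [hrec, norm_mul, norm_mul]; ring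
    _ ≤ Real.Gamma (σ + 2) := hnum

lemma continuous_Gamma_vertical (hσ : 0 < σ) : Continuous fun y : ℝ => Gamma (σ + y * I) := by
  refine continuous_iff_continuousAt.2 fun y =>
    ContinuousAt.comp (g := Complex.Gamma) ?_ (by fun_prop)
  refine continuousAt_Gamma _ fun m h => ?_
  have := congrArg re h
  simp at this
  linarith [(m.cast_nonneg : (0 : ℝ) ≤ m)]

lemma integrable_Gamma_vertical (hσ : 0 < σ) : Integrable fun y : ℝ => Gamma (σ + y * I) := by
  refine (integrable_inv_one_add_sq.const_mul (Real.Gamma (σ + 2) / min σ 1)).mono'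
    (continuous_Gamma_vertical hσ).aestronglyMeasurable (ae_of_all _ fun y => ?_)
  exact (norm_Gamma_vertical_le hσ y).trans_eq (by rw [← div_div, div_eq_mul_inv])

end Gamma

section ExpSeries

variable {ι : Type*} (c p : ι → ℝ)

noncomputable def expSeries (x : ℝ) : ℝ := ∑' i, c i * rexp (-(p i * x))

noncomputable def dirichletSeries (t : ℂ) : ℂ := ∑' i, (c i : ℂ) * (p i : ℂ) ^ (-t)

variable {c p} {σ : ℝ}

lemma summable_mul_exp_neg_mul (hc : ∀ i, 0 ≤ c i) (hp : ∀ i, 0 < p i) (hσ : 0 < σ)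
    (hsum : Summable fun i => c i * p i ^ (-σ)) {x : ℝ} (hx : 0 < x) :
    Summable fun i => c i * rexp (-(p i * x)) := by
  refine Summable.of_nonneg_of_le (fun i => mul_nonneg (hc i) (exp_pos _).le) (fun i => ?_)
    (hsum.mul_left (σ ^ σ * x ^ (-σ)))
  calc c i * rexp (-(p i * x)) ≤ c i * (σ ^ σ * (p i * x) ^ (-σ)) :=
        mul_le_mul_of_nonneg_left (exp_neg_le_rpow_mul_rpow_neg hσ (mul_pos (hp i) hx)) (hc i)
    _ = σ ^ σ * x ^ (-σ) * (c i * p i ^ (-σ)) := by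
        rw [Real.mul_rpow (hp i).le hx.le]; ring

lemma hasSum_expSeries (hc : ∀ i, 0 ≤ c i) (hp : ∀ i, 0 < p i) (hσ : 0 < σ)
    (hsum : Summable fun i => c i * p i ^ (-σ)) {x : ℝ} (hx : 0 < x) :
    HasSum (fun i => c i * rexp (-(p i * x))) (expSeries c p x) :=
  (summable_mul_exp_neg_mul hc hp hσ hsum hx).hasSum

lemma continuousOn_expSeries (hc : ∀ i, 0 ≤ c i) (hp : ∀ i, 0 < p i) (hσ : 0 < σ)
    (hsum : Summable fun i => c i * p i ^ (-σ)) : ContinuousOn (expSeries c p) (Ioi 0) := by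
  intro x (hx : 0 < x)
  -- on `(x / 2, ∞)` the series is dominated by its value at `x / 2`
  have hcont : ContinuousOn (expSeries c p) (Ioi (x / 2)) := by
    refine continuousOn_tsum (fun i => by fun_prop)
      (summable_mul_exp_neg_mul hc hp hσ hsum (half_pos hx)) fun i y (hy : x / 2 < y) => ?_
    rw [Real.norm_of_nonneg (mul_nonneg (hc i) (exp_pos _).le)]
    gcongr
    · exact hc i
    · exact (hp i).le
  exact (hcont.continuousAt (Ioi_mem_nhds (half_lt_self hx))).continuousWithinAt

lemma mellinConvergent_expSeries [Countable ι] (hc : ∀ i, 0 ≤ c i) (hp : ∀ i, 0 < p i) (hσ : 0 < σ)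
    (hsum : Summable fun i => c i * p i ^ (-σ)) :
    MellinConvergent (fun x => (expSeries c p x : ℂ)) σ := by
  have hval : ∀ i, ∫ x in Ioi 0, c i * (x ^ (σ - 1) * rexp (-(p i * x)))
      = Real.Gamma σ * (c i * p i ^ (-σ)) := fun i => by
    rw [integral_const_mul, integral_rpow_mul_exp_neg_mul_Ioi hσ (hp i), one_div,
      Real.inv_rpow (hp i).le, ← Real.rpow_neg (hp i).le]
    ring
  have hterm : ∀ i, IntegrableOn (fun x => x ^ (σ - 1) * rexp (-(p i * x))) (Ioi 0) := fun i =>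
    .of_integral_ne_zero (by
      rw [integral_rpow_mul_exp_neg_mul_Ioi hσ (hp i)]
      exact (mul_pos (rpow_pos_of_pos (one_div_pos.2 (hp i)) _) (Real.Gamma_pos_of_pos hσ)).ne')
  have hint := integrable_tsum_of_nonneg (fun i => (hterm i).const_mul (c i))
    (fun i => (ae_restrict_mem measurableSet_Ioi).mono fun x (hx : 0 < x) =>
      mul_nonneg (hc i) (mul_nonneg (rpow_nonneg hx.le _) (exp_pos _).le))
    ((hsum.mul_left (Real.Gamma σ)).congr fun i => (hval i).symm)
  have hmeas : AEStronglyMeasurable (fun x => (expSeries c p x : ℂ)) (volume.restrict (Ioi 0)) :=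
    (continuous_ofReal.comp_continuousOn
      (continuousOn_expSeries hc hp hσ hsum)).aestronglyMeasurable measurableSet_Ioi
  rw [MellinConvergent, mellin_convergent_iff_norm subset_rfl measurableSet_Ioi hmeas]
  refine IntegrableOn.congr_fun hint (fun x _ => ?_) measurableSet_Ioi
  have hF : 0 ≤ expSeries c p x := tsum_nonneg fun i => mul_nonneg (hc i) (exp_pos _).le
  rw [ofReal_re, norm_real, Real.norm_of_nonneg hF, expSeries, ← tsum_mul_left]
  exact tsum_congr fun i => by ring

lemma norm_ofReal_mul_cpow_neg {a b : ℝ} (ha : 0 ≤ a) (hb : 0 < b) (t : ℂ) :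
    ‖(a : ℂ) * (b : ℂ) ^ (-t)‖ = a * b ^ (-t.re) := by
  rw [norm_mul, norm_real, Real.norm_of_nonneg ha, norm_cpow_eq_rpow_re_of_pos hb, neg_re]

lemma mellin_expSeries [Countable ι] (hc : ∀ i, 0 ≤ c i) (hp : ∀ i, 0 < p i) {t : ℂ} (ht : 0 < t.re)
    (hsum : Summable fun i => c i * p i ^ (-t.re)) :
    mellin (fun x => (expSeries c p x : ℂ)) t = Gamma t * dirichletSeries c p t := by
  have hF : ∀ x ∈ Ioi (0 : ℝ), HasSum (fun i => (c i : ℂ) * rexp (-p i * x)) (expSeries c p x) :=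
    fun x hx => by
      simpa [neg_mul] using hasSum_ofReal.mpr (hasSum_expSeries hc hp ht hsum hx)
  have h_sum : Summable fun i => ‖(c i : ℂ)‖ / p i ^ t.re :=
    hsum.congr fun i => by
      rw [norm_real, Real.norm_of_nonneg (hc i), Real.rpow_neg (hp i).le, div_eq_mul_inv]
  rw [← (hasSum_mellin (fun i => Or.inr (hp i)) ht hF h_sum).tsum_eq, dirichletSeries,
    ← tsum_mul_left]
  exact tsum_congr fun i => by rw [cpow_neg, mul_div_assoc, div_eq_mul_inv]

lemma norm_dirichletSeries_le (hc : ∀ i, 0 ≤ c i) (hp : ∀ i, 0 < p i) (t : ℂ)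
    (hsum : Summable fun i => c i * p i ^ (-t.re)) :
    ‖dirichletSeries c p t‖ ≤ ∑' i, c i * p i ^ (-t.re) := by
  simp only [dirichletSeries, ← norm_ofReal_mul_cpow_neg (hc _) (hp _) t] at hsum ⊢
  exact norm_tsum_le_tsum_norm hsum

lemma continuous_dirichletSeries_vertical (hc : ∀ i, 0 ≤ c i) (hp : ∀ i, 0 < p i)
    (hsum : Summable fun i => c i * p i ^ (-σ)) :
    Continuous fun y : ℝ => dirichletSeries c p (σ + y * I) :=
  continuous_tsum (fun i => continuous_const.mul ((by fun_prop : Continuous fun y : ℝ =>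
      -((σ : ℂ) + y * I)).const_cpow (Or.inl (ofReal_ne_zero.mpr (hp i).ne')))) hsum fun i y => by
    rw [norm_ofReal_mul_cpow_neg (hc i) (hp i)]; simp

lemma verticalIntegrable_Gamma_mul_dirichletSeries (hc : ∀ i, 0 ≤ c i) (hp : ∀ i, 0 < p i)
    (hσ : 0 < σ) (hsum : Summable fun i => c i * p i ^ (-σ)) :
    VerticalIntegrable (fun t => Gamma t * dirichletSeries c p t) σ :=
  (integrable_Gamma_vertical hσ).mul_bdd
    (continuous_dirichletSeries_vertical hc hp hsum).aestronglyMeasurable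
    (ae_of_all _ fun y => by simpa using norm_dirichletSeries_le hc hp (σ + y * I) (by simpa))

theorem mellinInv_Gamma_mul_dirichletSeries [Countable ι] (hc : ∀ i, 0 ≤ c i) (hp : ∀ i, 0 < p i)
    (hσ : 0 < σ) (hsum : Summable fun i => c i * p i ^ (-σ)) {x : ℝ} (hx : 0 < x) :
    mellinInv σ (fun t => Gamma t * dirichletSeries c p t) x = expSeries c p x := by
  have hmellin : ∀ y : ℝ, mellin (fun x => (expSeries c p x : ℂ)) (σ + y * I)
      = Gamma (σ + y * I) * dirichletSeries c p (σ + y * I) := fun y =>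
    mellin_expSeries hc hp (by simpa) (by simpa)
  have hVI : VerticalIntegrable (mellin fun x => (expSeries c p x : ℂ)) σ := by
    simpa only [VerticalIntegrable, hmellin] using
      verticalIntegrable_Gamma_mul_dirichletSeries hc hp hσ hsum
  have hcont : ContinuousAt (fun x => (expSeries c p x : ℂ)) x :=
    continuous_ofReal.continuousAt.comp
      ((continuousOn_expSeries hc hp hσ hsum).continuousAt (Ioi_mem_nhds hx))
  rw [← mellinInv_mellin_eq σ _ hx (mellinConvergent_expSeries hc hp hσ hsum) hVI hcont]
  simp only [mellinInv, hmellin]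

end ExpSeries

section Product

variable {α β : Type*} {u : α → ℝ} {q c : β → ℝ}

lemma summable_prod_mul_rpow_neg (hu : ∀ l, 0 < u l) (hq : ∀ k, 0 < q k) (hc : ∀ k, 0 ≤ c k)
    {σ : ℝ} (hu_sum : Summable fun l => u l ^ (-σ)) (hcq_sum : Summable fun k => c k * q k ^ (-σ)) :
    Summable fun i : α × β => c i.2 * (u i.1 * q i.2) ^ (-σ) :=
  (hu_sum.mul_of_nonneg hcq_sum (fun l => (rpow_pos_of_pos (hu l) _).le)
    fun k => mul_nonneg (hc k) (rpow_pos_of_pos (hq k) _).le).congr fun i => by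
      rw [mul_rpow (hu i.1).le (hq i.2).le]; ring

lemma dirichletSeries_prod (hu : ∀ l, 0 < u l) (hq : ∀ k, 0 < q k) (hc : ∀ k, 0 ≤ c k) (t : ℂ)
    (hu_sum : Summable fun l => u l ^ (-t.re))
    (hcq_sum : Summable fun k => c k * q k ^ (-t.re)) :
    dirichletSeries (fun i : α × β => c i.2) (fun i => u i.1 * q i.2) t
      = (∑' l, (u l : ℂ) ^ (-t)) * dirichletSeries c q t := by
  have hu_norm : Summable fun l => ‖(u l : ℂ) ^ (-t)‖ :=
    hu_sum.congr fun l => by rw [norm_cpow_eq_rpow_re_of_pos (hu l), neg_re]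
  have hcq_norm : Summable fun k => ‖(c k : ℂ) * (q k : ℂ) ^ (-t)‖ :=
    hcq_sum.congr fun k => (norm_ofReal_mul_cpow_neg (hc k) (hq k) t).symm
  rw [dirichletSeries, dirichletSeries, tsum_mul_tsum_of_summable_norm hu_norm hcq_norm]
  exact tsum_congr fun i => by
    rw [ofReal_mul, mul_cpow_ofReal_nonneg (hu i.1).le (hq i.2).le]; ring

end Product

section Barnes

lemma hasSum_choose_mul_exp_neg_mul {s : ℕ} (hs : 1 ≤ s) (j : ℕ) {u : ℝ} (hu : 0 < u) :
    HasSum (fun k : ℕ => ((k + s - 1).choose (s - 1) : ℝ) * rexp (-(u * (k + j : ℕ))))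
      (rexp (-(u * j)) / (1 - rexp (-u)) ^ s) := by
  have hr : ‖rexp (-u)‖ < 1 := by
    rw [Real.norm_of_nonneg (exp_pos _).le, Real.exp_lt_one_iff]; linarith
  have h := (hasSum_choose_mul_geometric_of_norm_lt_one (s - 1) hr).mul_right (rexp (-u) ^ j)
  rw [Nat.sub_add_cancel hs, one_div_mul_eq_div] at h
  have hterm : ∀ k : ℕ, ((k + s - 1).choose (s - 1) : ℝ) * rexp (-(u * (k + j : ℕ)))
      = ((k + (s - 1)).choose (s - 1) : ℝ) * rexp (-u) ^ k * rexp (-u) ^ j := fun k => by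
    rw [Nat.add_sub_assoc hs, mul_assoc, ← pow_add, ← Real.exp_nat_mul]
    push_cast; ring_nf
  rw [funext hterm, show rexp (-(u * j)) = rexp (-u) ^ j by rw [← Real.exp_nat_mul]; ring_nf]
  exact h

lemma summable_choose_mul_rpow_neg {s j : ℕ} (hs : 1 ≤ s) (hj : 1 ≤ j) {r : ℝ} (hr : (s : ℝ) < r) :
    Summable fun k : ℕ => ((k + s - 1).choose (s - 1) : ℝ) * ((k + j : ℕ) : ℝ) ^ (-r) := by
  have hsum : Summable fun k : ℕ => ((k + j : ℕ) : ℝ) ^ (-(r - (s - 1))) := by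
    have := (summable_nat_add_iff (f := fun n : ℕ => (n : ℝ) ^ (-(r - (s - 1)))) j).mpr
      (Real.summable_nat_rpow.mpr (by linarith))
    simpa using this
  refine Summable.of_nonneg_of_le (fun k => by positivity) (fun k => ?_)
    (hsum.mul_left ((s : ℝ) ^ (s - 1)))
  have hq : (0 : ℝ) < (k + j : ℕ) := by exact_mod_cast (by omega : 0 < k + j)
  have hchoose : ((k + s - 1).choose (s - 1) : ℝ) ≤ ((s : ℝ) * (k + j : ℕ)) ^ (s - 1) := by
    have : k + s - 1 ≤ s * (k + j) := by
      have := Nat.le_mul_of_pos_left k hs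
      have := Nat.le_mul_of_pos_right s hj
      rw [Nat.mul_add]; omega
    exact_mod_cast (Nat.choose_le_pow _ _).trans (Nat.pow_le_pow_left this _)
  calc ((k + s - 1).choose (s - 1) : ℝ) * ((k + j : ℕ) : ℝ) ^ (-r)
      ≤ ((s : ℝ) * (k + j : ℕ)) ^ (s - 1) * ((k + j : ℕ) : ℝ) ^ (-r) := by gcongr
    _ = s ^ (s - 1) * ((k + j : ℕ) : ℝ) ^ (-(r - (s - 1))) := by
        rw [mul_pow, mul_assoc, ← rpow_natCast ((k + j : ℕ) : ℝ) (s - 1), ← rpow_add hq,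
          Nat.cast_sub hs]
        ring_nf

theorem tsum_exp_div_one_sub_exp_pow_eq_mellinInv {α : Type*} [Countable α] {u : α → ℝ}
    (hu : ∀ l, 0 < u l) {s j : ℕ} (hs : 1 ≤ s) (hj : 1 ≤ j) {σ : ℝ} (hσ : 0 < σ)
    (hsum : Summable fun i : α × ℕ =>
      ((i.2 + s - 1).choose (s - 1) : ℝ) * (u i.1 * (i.2 + j : ℕ)) ^ (-σ))
    {x : ℝ} (hx : 0 < x) :
    ((∑' l, rexp (-(x * j * u l)) / (1 - rexp (-(x * u l))) ^ s : ℝ) : ℂ)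
      = mellinInv σ (fun t => Gamma t * dirichletSeries
          (fun i : α × ℕ => ((i.2 + s - 1).choose (s - 1) : ℝ)) (fun i => u i.1 * (i.2 + j : ℕ)) t)
          x := by
  have hc : ∀ i : α × ℕ, (0 : ℝ) ≤ (i.2 + s - 1).choose (s - 1) := fun _ => Nat.cast_nonneg _
  have hp : ∀ i : α × ℕ, 0 < u i.1 * (i.2 + j : ℕ) := fun i =>
    mul_pos (hu i.1) (by exact_mod_cast (by omega : 0 < i.2 + j))
  rw [mellinInv_Gamma_mul_dirichletSeries hc hp hσ hsum hx,
    ((hasSum_expSeries hc hp hσ hsum hx).prod_fiberwise fun l => ?_).tsum_eq]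
  convert hasSum_choose_mul_exp_neg_mul hs j (mul_pos hx (hu l)) using 1
  · ext k; ring_nf
  · ring_nf

end Barnes

theorem S_sj_mellin_barnes_general (Λ : Set ℕ) (hΛ : ∀ l ∈ Λ, 1 ≤ l)
    (μ₀ : ℝ) (habs : ∀ r : ℝ, μ₀ < r → Summable fun l : Λ => ((l : ℝ) ^ r)⁻¹)
    (s j : ℕ) (hs : 1 ≤ s) (hj1 : 1 ≤ j)
    (a : ℝ) (ha : 0 < a) (σ : ℝ) (hσ : max μ₀ (s : ℝ) < σ) :
    ((∑' l : Λ, Real.exp (-(a * j * l)) / (1 - Real.exp (-(a * l))) ^ s : ℝ) : ℂ)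
      = (2 * (π : ℂ) * I)⁻¹ *
        ∫ y : ℝ,
          (a : ℂ) ^ (-((σ : ℂ) + y * I)) *
            (∑' l : Λ, ((l : ℕ) : ℂ) ^ (-((σ : ℂ) + y * I))) *
            (∑' k : ℕ, (((k + s - 1).choose (s - 1) : ℕ) : ℂ) *
              (((k + j : ℕ) : ℂ) ^ (-((σ : ℂ) + y * I)))) *
            Complex.Gamma ((σ : ℂ) + y * I) * I := by
  have hσs : (s : ℝ) < σ := (le_max_right _ _).trans_lt hσ
  have hσ0 : 0 < σ := (Nat.cast_pos.2 hs).trans hσs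
  have hl : ∀ l : Λ, (0 : ℝ) < (l : ℕ) := fun l => by exact_mod_cast hΛ l l.2
  have hq : ∀ k : ℕ, (0 : ℝ) < (k + j : ℕ) := fun k => by exact_mod_cast (by omega : 0 < k + j)
  have hc : ∀ k : ℕ, (0 : ℝ) ≤ ((k + s - 1).choose (s - 1) : ℕ) := fun k => Nat.cast_nonneg _
  have hΛsum : Summable fun l : Λ => ((l : ℕ) : ℝ) ^ (-σ) :=
    (habs σ ((le_max_left _ _).trans_lt hσ)).congr fun l => (rpow_neg (hl l).le σ).symm
  have hBsum := summable_choose_mul_rpow_neg hs hj1 hσs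
  have hsum := summable_prod_mul_rpow_neg hl hq hc hΛsum hBsum
  have h2πI : (2 * (π : ℂ) * I)⁻¹ * I = ((1 / (2 * π) : ℝ) : ℂ) := by
    push_cast; field_simp
  rw [tsum_exp_div_one_sub_exp_pow_eq_mellinInv hl hs hj1 hσ0 hsum ha, mellinInv,
    integral_mul_const, Complex.real_smul, mul_comm (∫ y : ℝ, _) I, ← mul_assoc, h2πI]
  congr 1
  refine integral_congr_ae (ae_of_all _ fun y => ?_)
  simp only [smul_eq_mul]
  rw [dirichletSeries_prod hl hq hc _ (by simpa using hΛsum) (by simpa using hBsum)]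
  simp only [dirichletSeries, ofReal_natCast]
  ring

/-- Mellin–Barnes representation of `∑_{λ∈Λ} e^{-ajλ}/(1-e^{-aλ})^s`:
for `s ≥ 1`, `1 ≤ j ≤ s`, `a > 0`, and `σ > max(μ₀, s)` where the Dirichlet series
`ζ_Λ(t) = ∑_{λ∈Λ} λ^{-t}` converges absolutely for `Re t > μ₀`, one has
`∑_{λ∈Λ} e^{-ajλ}/(1-e^{-aλ})^s
   = (1/2πi) ∫_{σ-i∞}^{σ+i∞} a^{-t} ζ_Λ(t) ζ_B^{(s)}(t,j) Γ(t) dt`,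
with `ζ_B^{(s)}(t,j) = ∑_{l≥0} C(l+s-1,s-1) (l+j)^{-t}` the Barnes zeta function of
dimension `s`. -/
theorem S_sj_mellin_barnes (Λ : Set ℕ) (hΛ : ∀ l ∈ Λ, 1 ≤ l)
    (μ₀ : ℝ) (habs : ∀ r : ℝ, μ₀ < r → Summable fun l : Λ => ((l : ℝ) ^ r)⁻¹)
    (s j : ℕ) (hs : 1 ≤ s) (hj1 : 1 ≤ j) (hjs : j ≤ s)
    (a : ℝ) (ha : 0 < a) (σ : ℝ) (hσ : max μ₀ (s : ℝ) < σ) :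
    ((∑' l : Λ, Real.exp (-(a * j * l)) / (1 - Real.exp (-(a * l))) ^ s : ℝ) : ℂ)
      = (2 * (π : ℂ) * I)⁻¹ *
        ∫ y : ℝ,
          (a : ℂ) ^ (-((σ : ℂ) + y * I)) *
            (∑' l : Λ, ((l : ℕ) : ℂ) ^ (-((σ : ℂ) + y * I))) *
            (∑' k : ℕ, (((k + s - 1).choose (s - 1) : ℕ) : ℂ) *
              (((k + j : ℕ) : ℂ) ^ (-((σ : ℂ) + y * I)))) *
            Complex.Gamma ((σ : ℂ) + y * I) * I :=
  S_sj_mellin_barnes_general Λ hΛ μ₀ habs s j hs hj1 a ha σ hσ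
end

section
/- Suppose Λ is a sequence of positive integers with Θ(t) = ∑_{λ∈Λ} e^{-λt} convergent for t > 0, and suppose Θ(t) admits an asymptotic expansion Θ(t) ~ ∑_{n≥0} A_{i_n} t^{i_n} as t → 0⁺ with i₀ < 0 and i_n strictly increasing to ∞. Then the meromorphically continued zeta function ζ_Λ(s) = (1/Γ(s))∫₀^∞ t^{s-1}Θ(t) dt has, at each point s = -i_n with i_n not a nonnegative integer, a simple pole with residue A_{i_n}/Γ(-i_n). -/
open Real Filter Asymptotics Topology


open Set MeasureTheory Complex



/-! ### Connectivity of a half-plane minus finitely many real points -/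

lemma joinedIn_of_segment {s : Set ℂ} {x y : ℂ} (h : segment ℝ x y ⊆ s) : JoinedIn s x y :=
  (((convex_segment x y).isPathConnected ⟨x, left_mem_segment ℝ x y⟩).joinedIn x
    (left_mem_segment ℝ x y) y (right_mem_segment ℝ x y)).mono h

lemma convex_comb_lt {c u v a b : ℝ} (hu : c < u) (hv : c < v) (ha : 0 ≤ a) (hb : 0 ≤ b)
    (hab : a + b = 1) : c < a * u + b * v := by
  have h1 : a * min u v ≤ a * u := mul_le_mul_of_nonneg_left (min_le_left u v) ha
  have h2 : b * min u v ≤ b * v := mul_le_mul_of_nonneg_left (min_le_right u v) hb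
  have hm : a * min u v + b * min u v = min u v := by linear_combination (min u v) * hab
  have := lt_min hu hv
  linarith

lemma halfplane_sign_pathConnected (c : ℝ) (F : Set ℂ) (hFim : ∀ z ∈ F, z.im = 0)
    (x₀ σ : ℝ) (hx₀ : c < x₀) (hσ : σ ^ 2 = 1) :
    IsPathConnected (({z : ℂ | c < z.re ∧ 0 ≤ σ * z.im} \ F)) := by
  set U := {z : ℂ | c < z.re ∧ 0 ≤ σ * z.im} \ F with hU
  have hσ0 : σ ≠ 0 := by intro h; rw [h] at hσ; norm_num at hσ
  have hb : (⟨x₀, σ⟩ : ℂ) ∈ U := by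
    refine ⟨⟨hx₀, by show (0:ℝ) ≤ σ * σ; nlinarith [hσ]⟩, fun hmem => hσ0 (hFim _ hmem)⟩
  refine ⟨⟨x₀, σ⟩, hb, ?_⟩
  intro z hz
  obtain ⟨⟨hzre, hzim⟩, hzF⟩ := hz
  have h1 : JoinedIn U z ⟨z.re, σ⟩ := by
    apply joinedIn_of_segment
    rintro w ⟨a, b, ha, hb', hab, rfl⟩
    have him : (a • z + b • (⟨z.re, σ⟩ : ℂ)).im = a * z.im + b * σ := by
      simp [Complex.add_im, Complex.smul_im]
    have hre : (a • z + b • (⟨z.re, σ⟩ : ℂ)).re = z.re := by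
      simp only [Complex.add_re, Complex.smul_re]
      show a * z.re + b * z.re = z.re
      linear_combination z.re * hab
    constructor
    · refine ⟨by rw [hre]; exact hzre, ?_⟩
      rw [him]
      have : σ * (a * z.im + b * σ) = a * (σ * z.im) + b * σ ^ 2 := by ring
      rw [this, hσ, mul_one]; positivity
    · intro hmem
      have h0 := hFim _ hmem
      rw [him] at h0
      have h0' : a * (σ * z.im) + b = 0 := by
        linear_combination σ * h0 - b * hσ
      have hb0 : b = 0 := by nlinarith [mul_nonneg ha hzim]
      have ha1 : a = 1 := by rw [hb0, add_zero] at hab; exact hab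
      rw [hb0, ha1] at hmem
      simp only [one_smul, zero_smul, add_zero] at hmem
      exact hzF hmem
  have h2 : JoinedIn U (⟨z.re, σ⟩ : ℂ) ⟨x₀, σ⟩ := by
    apply joinedIn_of_segment
    rintro w ⟨a, b, ha, hb', hab, rfl⟩
    have him : (a • (⟨z.re, σ⟩ : ℂ) + b • (⟨x₀, σ⟩ : ℂ)).im = σ := by
      simp only [Complex.add_im, Complex.smul_im]
      show a * σ + b * σ = σ
      linear_combination σ * hab
    have hre : (a • (⟨z.re, σ⟩ : ℂ) + b • (⟨x₀, σ⟩ : ℂ)).re = a * z.re + b * x₀ := by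
      simp [Complex.add_re, Complex.smul_re]
    constructor
    · exact ⟨by rw [hre]; exact convex_comb_lt hzre hx₀ ha hb' hab,
        by rw [him]; nlinarith [hσ]⟩
    · intro hmem; exact hσ0 (him ▸ hFim _ hmem)
  exact (h1.trans h2).symm

lemma halfplane_diff_preconnected (c : ℝ) (F : Set ℂ) (hFim : ∀ z ∈ F, z.im = 0)
    (x₀ : ℝ) (hx₀ : c < x₀) (hx₀F : (x₀ : ℂ) ∉ F) :
    IsPreconnected ({z : ℂ | c < z.re} \ F) := by
  have hpos := (halfplane_sign_pathConnected c F hFim x₀ 1 hx₀ (by norm_num)).isConnected.isPreconnected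
  have hneg := (halfplane_sign_pathConnected c F hFim x₀ (-1) hx₀ (by norm_num)).isConnected.isPreconnected
  have hx : (x₀ : ℂ) ∈ ({z : ℂ | c < z.re ∧ 0 ≤ (1:ℝ) * z.im} \ F) :=
    ⟨⟨by simpa using hx₀, by simp⟩, hx₀F⟩
  have hx' : (x₀ : ℂ) ∈ ({z : ℂ | c < z.re ∧ 0 ≤ (-1:ℝ) * z.im} \ F) :=
    ⟨⟨by simpa using hx₀, by simp⟩, hx₀F⟩
  have h := IsPreconnected.union (x₀ : ℂ) hx hx' hpos hneg
  convert h using 1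
  ext z
  simp only [Set.mem_diff, Set.mem_union, Set.mem_setOf_eq]
  constructor
  · rintro ⟨h1, h2⟩
    rcases le_total 0 z.im with h | h
    · exact Or.inl ⟨⟨h1, by linarith⟩, h2⟩
    · exact Or.inr ⟨⟨h1, by linarith⟩, h2⟩
  · rintro (⟨⟨h1, _⟩, h2⟩ | ⟨⟨h1, _⟩, h2⟩) <;> exact ⟨h1, h2⟩

/-! ### Partition function lemmas -/

lemma theta_contAt (Λ : ℕ → ℕ) (hpos : ∀ k, 1 ≤ Λ k)
    (hsum : ∀ t : ℝ, 0 < t → Summable fun k => Real.exp (-(Λ k : ℝ) * t)) :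
    ∀ t : ℝ, 0 < t → ContinuousAt (fun t => ∑' k, Real.exp (-(Λ k : ℝ) * t)) t := by
  intro t ht
  have h2 : (0:ℝ) < t/2 := by linarith
  have hcont : ContinuousOn (fun x => ∑' k, Real.exp (-(Λ k : ℝ) * x)) (Ici (t/2)) := by
    apply continuousOn_tsum (u := fun k => Real.exp (-(Λ k : ℝ) * (t/2)))
    · intro k; exact (Continuous.continuousOn (by continuity))
    · exact hsum _ h2
    · intro k x hx
      rw [Real.norm_eq_abs, _root_.abs_of_nonneg (Real.exp_nonneg _)]
      apply Real.exp_le_exp.2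
      have hk : (0:ℝ) < (Λ k : ℝ) := by exact_mod_cast hpos k
      nlinarith [mem_Ici.1 hx]
  exact hcont.continuousAt (Ici_mem_nhds (by linarith))

lemma theta_nonneg (Λ : ℕ → ℕ) : ∀ t : ℝ, 0 ≤ ∑' k, Real.exp (-(Λ k : ℝ) * t) :=
  fun _ => tsum_nonneg (fun _ => (Real.exp_nonneg _))

lemma theta_decay (Λ : ℕ → ℕ) (hpos : ∀ k, 1 ≤ Λ k)
    (hsum : ∀ t : ℝ, 0 < t → Summable fun k => Real.exp (-(Λ k : ℝ) * t)) :
    ∀ t : ℝ, 1 ≤ t →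
    (∑' k, Real.exp (-(Λ k : ℝ) * t)) ≤ Real.exp (1 - t) * ∑' k, Real.exp (-(Λ k : ℝ) * 1) := by
  intro t ht
  rw [← tsum_mul_left]
  apply Summable.tsum_le_tsum _ (hsum t (by linarith)) ((hsum 1 one_pos).mul_left _)
  intro k
  rw [← Real.exp_add]
  apply Real.exp_le_exp.2
  have hk : (1:ℝ) ≤ (Λ k : ℝ) := by exact_mod_cast hpos k
  nlinarith

/-! ### Mellin transform decomposition -/

lemma mellinConvergent_finset_sum {N : ℕ} {q : ℕ → ℝ → ℂ} {s : ℂ}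
    (hq : ∀ m ∈ Finset.range N, MellinConvergent (q m) s) :
    MellinConvergent (fun t => ∑ m ∈ Finset.range N, q m t) s := by
  have h : (fun t : ℝ => (t:ℂ) ^ (s-1) • ∑ m ∈ Finset.range N, q m t)
      = fun t : ℝ => ∑ m ∈ Finset.range N, (t:ℂ) ^ (s-1) • q m t := by
    funext t; exact Finset.smul_sum
  unfold MellinConvergent
  rw [h]
  exact integrable_finset_sum _ hq

lemma mellin_finset_sum {N : ℕ} {q : ℕ → ℝ → ℂ} {s : ℂ}
    (hq : ∀ m ∈ Finset.range N, MellinConvergent (q m) s) :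
    mellin (fun t => ∑ m ∈ Finset.range N, q m t) s = ∑ m ∈ Finset.range N, mellin (q m) s := by
  unfold mellin
  have h : (fun t : ℝ => (t:ℂ) ^ (s-1) • ∑ m ∈ Finset.range N, q m t)
      = fun t : ℝ => ∑ m ∈ Finset.range N, (t:ℂ) ^ (s-1) • q m t := by
    funext t; exact Finset.smul_sum
  rw [h]
  exact integral_finset_sum _ hq

lemma mellin_decomp {g h : ℝ → ℂ} {N : ℕ} {q : ℕ → ℝ → ℂ} {f : ℝ → ℂ} {s : ℂ}
    (hg : MellinConvergent g s) (hh : MellinConvergent h s)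
    (hq : ∀ m ∈ Finset.range N, MellinConvergent (q m) s)
    (heq : ∀ t ∈ Set.Ioi (0:ℝ), f t = g t + h t + ∑ m ∈ Finset.range N, q m t) :
    mellin f s = mellin g s + mellin h s + ∑ m ∈ Finset.range N, mellin (q m) s := by
  have hS := mellinConvergent_finset_sum hq
  have hgh := hasMellin_add hg hh
  have hall := hasMellin_add hgh.1 hS
  have h1 : mellin f s = mellin (fun t => g t + h t + ∑ m ∈ Finset.range N, q m t) s := by
    unfold mellin
    apply setIntegral_congr_fun measurableSet_Ioi
    intro t ht
    dsimp only
    rw [heq t ht]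
  rw [h1, hall.2, hgh.2, mellin_finset_sum hq]

/-- Coercion transfer for IsBigO. -/
lemma isBigO_ofReal_comp {f : ℝ → ℝ} {g : ℝ → ℝ} {l : Filter ℝ} (h : f =O[l] g) :
    (fun t => ((f t : ℝ) : ℂ)) =O[l] g :=
  (isBigO_of_le l fun x => by rw [Complex.norm_real]).trans h



/-- Residues of the zeta function associated to a sequence `Λ` of positive integers:
if the partition function `Θ(t) = ∑_k e^{-Λ_k t}` converges for `t > 0` and admits a
full asymptotic expansion `Θ(t) ~ ∑_n A_n t^{i_n}` as `t → 0⁺` (with `i₀ < 0`, `i_n`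
strictly increasing to `∞`), then the meromorphic continuation `Z` of
`ζ_Λ(s) = (1/Γ(s)) ∫₀^∞ t^{s-1} Θ(t) dt` has, at every `s = -i_n` with `i_n` not a
nonnegative integer, a simple pole with residue `A_{i_n}/Γ(-i_n)`. -/
theorem zeta_lambda_residues (Λ : ℕ → ℕ) (hpos : ∀ k, 1 ≤ Λ k)
    (hsum : ∀ t : ℝ, 0 < t → Summable fun k => Real.exp (-(Λ k : ℝ) * t))
    (i : ℕ → ℝ) (A : ℕ → ℝ) (hmono : StrictMono i) (hi0 : i 0 < 0)
    (hitop : Tendsto i atTop atTop)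
    (hasymp : ∀ N : ℕ,
      (fun t : ℝ => (∑' k, Real.exp (-(Λ k : ℝ) * t)) -
          ∑ n ∈ Finset.range N, A n * t ^ (i n))
        =O[nhdsWithin 0 (Set.Ioi 0)] fun t : ℝ => t ^ (i N))
    (Z : ℂ → ℂ)
    (hZ : ∀ s : ℂ, -(i 0) < s.re →
      Z s = (Complex.Gamma s)⁻¹ *
        ∫ t in Set.Ioi (0 : ℝ),
          (t : ℂ) ^ (s - 1) * ((∑' k, Real.exp (-(Λ k : ℝ) * t) : ℝ) : ℂ))
    (hZanalytic : ∀ s : ℂ, (∀ n, s ≠ (-(i n) : ℝ)) → AnalyticAt ℂ Z s) :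
    ∀ n : ℕ, (∀ m : ℕ, i n ≠ (m : ℝ)) →
      Tendsto (fun s : ℂ => (s + (i n : ℝ)) * Z s)
        (𝓝[≠] ((-(i n) : ℝ) : ℂ))
        (𝓝 ((A n / Real.Gamma (-(i n)) : ℝ) : ℂ)) := by
  intro n _hn
  have hΘcont : ∀ t : ℝ, 0 < t →
      ContinuousAt (fun t => ∑' k, Real.exp (-(Λ k : ℝ) * t)) t := theta_contAt Λ hpos hsum
  have hΘnn := theta_nonneg Λ
  have hΘdecay := theta_decay Λ hpos hsum
  set Θ : ℝ → ℝ := fun t => ∑' k, Real.exp (-(Λ k : ℝ) * t) with hΘdef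
  set Θℂ : ℝ → ℂ := fun t => ((Θ t : ℝ) : ℂ) with hΘℂdef
  set φ : ℝ → ℂ :=
    fun t => Θℂ t - ∑ m ∈ Finset.range (n+1), (A m : ℂ) * (t : ℂ) ^ ((i m : ℝ) : ℂ) with hφdef
  set g : ℝ → ℂ := (Set.Ioc (0:ℝ) 1).indicator φ with hgdef
  set h : ℝ → ℂ := (Set.Ioi (1:ℝ)).indicator Θℂ with hhdef
  set q : ℕ → ℝ → ℂ := fun m t =>
    (A m : ℂ) • (Set.Ioc (0:ℝ) 1).indicator (fun t => (t : ℂ) ^ ((i m : ℝ) : ℂ)) t with hqdef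
  -- continuity facts
  have hΘℂcont : ContinuousOn Θℂ (Set.Ioi 0) := fun t ht =>
    (Complex.continuous_ofReal.continuousAt.comp (hΘcont t ht)).continuousWithinAt
  have hcpow : ∀ (c : ℂ) (t : ℝ), 0 < t → ContinuousAt (fun u : ℝ => (u : ℂ) ^ c) t := by
    intro c t ht
    exact continuousAt_ofReal_cpow_const t c (Or.inr (ne_of_gt ht))
  have hφcont : ContinuousOn φ (Set.Ioi 0) := by
    rw [hφdef]
    apply ContinuousOn.sub hΘℂcont
    apply continuousOn_finset_sum
    intro m _
    exact fun t ht => (continuousWithinAt_const.mul (hcpow _ t ht).continuousWithinAt)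
  -- local integrability
  have hloc : ∀ (S : Set ℝ), MeasurableSet S → ∀ (f : ℝ → ℂ), ContinuousOn f (Set.Ioi 0) →
      LocallyIntegrableOn (S.indicator f) (Set.Ioi 0) := by
    intro S hS f hf
    rw [locallyIntegrableOn_iff isOpen_Ioi.isLocallyClosed]
    intro K hK hKc
    exact ((hf.mono hK).integrableOn_compact hKc).indicator hS
  have hg_loc : LocallyIntegrableOn g (Set.Ioi 0) := hgdef ▸ hloc _ measurableSet_Ioc φ hφcont
  have hh_loc : LocallyIntegrableOn h (Set.Ioi 0) := hhdef ▸ hloc _ measurableSet_Ioi Θℂ hΘℂcont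
  -- asymptotic bounds
  have hg_top0 : g =ᶠ[atTop] (fun _ => (0:ℂ)) := by
    filter_upwards [Filter.eventually_gt_atTop 1] with t ht
    exact Set.indicator_of_notMem (fun hmem => absurd hmem.2 (not_le.2 ht)) _
  have hg_top : ∀ a : ℝ, g =O[atTop] (fun t : ℝ => t ^ (-a)) := fun a =>
    hg_top0.trans_isBigO (isBigO_zero _ _)
  have hh_bot0 : h =ᶠ[𝓝[>] (0:ℝ)] (fun _ => (0:ℂ)) := by
    filter_upwards [Ioc_mem_nhdsGT one_pos] with t ht
    exact Set.indicator_of_notMem (fun hmem => absurd hmem (not_lt.2 ht.2)) _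
  have hh_bot : ∀ b : ℝ, h =O[𝓝[>] (0:ℝ)] (fun t : ℝ => t ^ (-b)) := fun b =>
    hh_bot0.trans_isBigO (isBigO_zero _ _)
  have hh_top : h =O[atTop] (fun t => Real.exp (-1 * t)) := by
    rw [isBigO_iff]
    refine ⟨Real.exp 1 * Θ 1, ?_⟩
    filter_upwards [Filter.eventually_gt_atTop 1] with t ht
    have h1 : h t = Θℂ t := by rw [hhdef]; exact Set.indicator_of_mem ht _
    rw [h1, hΘℂdef]
    simp only [Complex.norm_real, Real.norm_eq_abs]
    rw [_root_.abs_of_nonneg (hΘnn t), _root_.abs_of_nonneg (Real.exp_nonneg _)]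
    have hd := hΘdecay t ht.le
    have e1 : Real.exp (1 - t) = Real.exp 1 * Real.exp (-t) := by
      rw [← Real.exp_add]; ring_nf
    rw [e1] at hd
    calc Θ t ≤ Real.exp 1 * Real.exp (-t) * Θ 1 := hd
    _ = Real.exp 1 * Θ 1 * Real.exp (-1 * t) := by rw [neg_one_mul]; ring
  have hg_bot : g =O[𝓝[>] (0:ℝ)] (fun t : ℝ => t ^ (i (n+1))) := by
    have hev : g =ᶠ[𝓝[>] (0:ℝ)]
        (fun t => (((Θ t - ∑ m ∈ Finset.range (n+1), A m * t ^ (i m) : ℝ)) : ℂ)) := by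
      filter_upwards [Ioc_mem_nhdsGT one_pos] with t ht
      rw [hgdef]
      rw [Set.indicator_of_mem ht, hφdef]
      push_cast
      congr 1
      apply Finset.sum_congr rfl
      intro m _
      rw [Complex.ofReal_cpow ht.1.le]
    exact hev.trans_isBigO (isBigO_ofReal_comp (hasymp (n+1)))
  -- differentiability and convergence of the Mellin pieces
  have hGdiff : ∀ s : ℂ, -(i (n+1)) < s.re → DifferentiableAt ℂ (mellin g) s := by
    intro s hs
    refine mellin_differentiableAt_of_isBigO_rpow (a := s.re + 1) (b := -(i (n+1)))
      hg_loc (hg_top _) (by linarith) ?_ (by linarith)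
    simpa [neg_neg] using hg_bot
  have hHdiff : ∀ s : ℂ, DifferentiableAt ℂ (mellin h) s := by
    intro s
    exact mellin_differentiableAt_of_isBigO_rpow_exp one_pos hh_loc hh_top
      (hh_bot (s.re - 1)) (by linarith)
  have hGconv : ∀ s : ℂ, -(i (n+1)) < s.re → MellinConvergent g s := by
    intro s hs
    refine mellinConvergent_of_isBigO_rpow (a := s.re + 1) (b := -(i (n+1)))
      hg_loc (hg_top _) (by linarith) ?_ (by linarith)
    simpa [neg_neg] using hg_bot
  have hHconv : ∀ s : ℂ, MellinConvergent h s := fun s =>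
    mellinConvergent_of_isBigO_rpow_exp one_pos hh_loc hh_top (hh_bot (s.re - 1)) (by linarith)
  have hq_mell : ∀ (m : ℕ) (s : ℂ), -(i m) < s.re →
      MellinConvergent (q m) s ∧ mellin (q m) s = (A m : ℂ) * (1 / (s + ((i m : ℝ) : ℂ))) := by
    intro m s hs
    have h0 : 0 < s.re + ((i m : ℝ) : ℂ).re := by
      rw [Complex.ofReal_re]; linarith
    have H := hasMellin_cpow_Ioc ((i m : ℝ) : ℂ) h0
    constructor
    · exact H.1.const_smul _
    · rw [hqdef, mellin_const_smul, H.2, smul_eq_mul]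
  -- the key decomposition on the initial half-plane
  have hi0n : i 0 < i (n + 1) := hmono (Nat.succ_pos n)
  have hkey : ∀ s : ℂ, -(i 0) < s.re →
      mellin Θℂ s = mellin g s + mellin h s
        + ∑ m ∈ Finset.range (n+1), (A m : ℂ) * (1 / (s + ((i m : ℝ) : ℂ))) := by
    intro s hs
    have hin : -(i (n+1)) < s.re := by linarith
    have him : ∀ m, m ≤ n → -(i m) < s.re := by
      intro m hm
      have : i 0 ≤ i m := hmono.monotone (Nat.zero_le m)
      linarith
    have hqc : ∀ m ∈ Finset.range (n+1), MellinConvergent (q m) s := fun m hm =>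
      (hq_mell m s (him m (Nat.lt_succ_iff.mp (Finset.mem_range.1 hm)))).1
    have hd := mellin_decomp (f := Θℂ) (hGconv s hin) (hHconv s) hqc ?_
    · rw [hd]
      congr 1
      apply Finset.sum_congr rfl
      intro m hm
      exact (hq_mell m s (him m (Nat.lt_succ_iff.mp (Finset.mem_range.1 hm)))).2
    · intro t ht
      by_cases h1 : t ≤ 1
      · have htm : t ∈ Set.Ioc (0:ℝ) 1 := ⟨ht, h1⟩
        have e1 : (Set.Ioi (1:ℝ)).indicator Θℂ t = 0 :=
          Set.indicator_of_notMem (by simp only [Set.mem_Ioi, not_lt]; exact h1) _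
        rw [hgdef, hhdef, hqdef]
        simp only [Set.indicator_of_mem htm, e1, smul_eq_mul, hφdef]
        ring
      · have htm : t ∉ Set.Ioc (0:ℝ) 1 := fun hc => h1 hc.2
        have e1 : (Set.Ioi (1:ℝ)).indicator Θℂ t = Θℂ t :=
          Set.indicator_of_mem (not_le.1 h1) _
        rw [hgdef, hhdef, hqdef]
        simp only [Set.indicator_of_notMem htm, e1, smul_eq_mul, mul_zero,
          Finset.sum_const_zero, zero_add, add_zero]
  -- the continued function W and the exceptional set F
  set W : ℂ → ℂ := fun s => (Complex.Gamma s)⁻¹ *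
    (mellin g s + mellin h s
      + ∑ m ∈ Finset.range (n+1), (A m : ℂ) * (1 / (s + ((i m : ℝ) : ℂ)))) with hWdef
  set F : Set ℂ := ⋃ m ∈ Finset.range (n+1), {((-(i m) : ℝ) : ℂ)} with hFdef
  have hFmem : ∀ z : ℂ, z ∈ F ↔ ∃ m ≤ n, z = ((-(i m) : ℝ) : ℂ) := by
    intro z
    rw [hFdef]
    simp only [Set.mem_iUnion, Set.mem_singleton_iff, Finset.mem_range, Nat.lt_succ_iff,
      exists_prop]
  have hFim : ∀ z ∈ F, z.im = 0 := by
    intro z hz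
    obtain ⟨m, _, rfl⟩ := (hFmem z).1 hz
    exact Complex.ofReal_im _
  have hFfin : F.Finite := by
    rw [hFdef]
    exact Set.Finite.biUnion (Finset.range (n+1)).finite_toSet (fun m _ => Set.finite_singleton _)
  set U : Set ℂ := {z : ℂ | -(i (n+1)) < z.re} \ F with hUdef
  have hUopen : IsOpen U :=
    (isOpen_lt continuous_const Complex.continuous_re).sdiff hFfin.isClosed
  have hx₀ : -(i (n+1)) < 1 - i 0 := by linarith
  have hUpre : IsPreconnected U := by
    rw [hUdef]
    apply halfplane_diff_preconnected _ F hFim (1 - i 0) hx₀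
    intro hmem
    obtain ⟨m, hm, hEq⟩ := (hFmem _).1 hmem
    have h2 : (1 - i 0 : ℝ) = -(i m) := Complex.ofReal_inj.1 hEq
    have h3 : i 0 ≤ i m := hmono.monotone (Nat.zero_le m)
    linarith
  -- Z and W agree on U
  have hZU : AnalyticOnNhd ℂ Z U := by
    intro s hs
    apply hZanalytic
    intro m
    rcases le_or_gt m n with hm | hm
    · exact fun hEq => hs.2 ((hFmem s).2 ⟨m, hm, hEq⟩)
    · intro hEq
      have h1 : i (n+1) ≤ i m := hmono.monotone hm
      have h2 : s.re = -(i m) := by rw [hEq]; exact Complex.ofReal_re _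
      have h4 : -(i (n+1)) < s.re := hs.1
      rw [h2] at h4
      linarith
  have hWU : AnalyticOnNhd ℂ W U := by
    apply DifferentiableOn.analyticOnNhd _ hUopen
    intro s hs
    apply DifferentiableAt.differentiableWithinAt
    rw [hWdef]
    apply DifferentiableAt.mul
    · exact Complex.differentiable_one_div_Gamma s
    · refine ((hGdiff s hs.1).add (hHdiff s)).add (DifferentiableAt.fun_sum ?_)
      intro m hm
      have hne : s + ((i m : ℝ) : ℂ) ≠ 0 := by
        intro h0
        have h1 : s = ((-(i m) : ℝ) : ℂ) := by
          push_cast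
          exact eq_neg_of_add_eq_zero_left h0
        exact hs.2 ((hFmem s).2 ⟨m, Nat.lt_succ_iff.mp (Finset.mem_range.1 hm), h1⟩)
      exact (differentiableAt_const _).mul
        ((differentiableAt_const _).div (differentiableAt_id.add_const _) hne)
  have hZW : Set.EqOn Z W {z : ℂ | -(i 0) < z.re} := by
    intro s hs
    rw [hZ s hs, hWdef]
    have hmel : (∫ t in Set.Ioi (0:ℝ),
        (t : ℂ) ^ (s - 1) * ((∑' k, Real.exp (-(Λ k : ℝ) * t) : ℝ) : ℂ)) = mellin Θℂ s := by
      rw [mellin]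
      apply setIntegral_congr_fun measurableSet_Ioi
      intro t _
      simp only [hΘℂdef, hΘdef, smul_eq_mul]
    rw [hmel, hkey s hs]
  have hz₀U : ((1 - i 0 : ℝ) : ℂ) ∈ U := by
    rw [hUdef]
    constructor
    · show -(i (n+1)) < ((1 - i 0 : ℝ) : ℂ).re
      rw [Complex.ofReal_re]; exact hx₀
    · intro hmem
      obtain ⟨m, hm, hEq⟩ := (hFmem _).1 hmem
      have h2 : (1 - i 0 : ℝ) = -(i m) := Complex.ofReal_inj.1 hEq
      have h3 : i 0 ≤ i m := hmono.monotone (Nat.zero_le m)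
      linarith
  have hev : Z =ᶠ[𝓝 ((1 - i 0 : ℝ) : ℂ)] W := by
    have hop : {z : ℂ | -(i 0) < z.re} ∈ 𝓝 ((1 - i 0 : ℝ) : ℂ) := by
      apply (isOpen_lt continuous_const Complex.continuous_re).mem_nhds
      show -(i 0) < ((1 - i 0 : ℝ) : ℂ).re
      rw [Complex.ofReal_re]; linarith
    filter_upwards [hop] with z hz using hZW hz
  have hZWU : Set.EqOn Z W U := hZU.eqOn_of_preconnected_of_eventuallyEq hWU hUpre hz₀U hev
  -- eventual membership in U near the pole
  set s₀ : ℂ := ((-(i n) : ℝ) : ℂ) with hs₀def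
  have hs₀re : s₀.re = -(i n) := Complex.ofReal_re _
  have hinn : i n < i (n+1) := hmono (lt_add_one n)
  have hmemU : ∀ᶠ s in 𝓝[≠] s₀, s ∈ U := by
    have hF' : IsClosed (F \ {s₀}) := (hFfin.subset Set.diff_subset).isClosed
    have hVopen : IsOpen ({z : ℂ | -(i (n+1)) < z.re} ∩ (F \ {s₀})ᶜ) :=
      (isOpen_lt continuous_const Complex.continuous_re).inter hF'.isOpen_compl
    have hs₀V : s₀ ∈ {z : ℂ | -(i (n+1)) < z.re} ∩ (F \ {s₀})ᶜ := by
      constructor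
      · show -(i (n+1)) < s₀.re
        rw [hs₀re]; linarith
      · intro hc
        exact hc.2 rfl
    have hVev : ∀ᶠ s in 𝓝 s₀, s ∈ {z : ℂ | -(i (n+1)) < z.re} ∩ (F \ {s₀})ᶜ :=
      hVopen.mem_nhds hs₀V
    filter_upwards [hVev.filter_mono nhdsWithin_le_nhds, self_mem_nhdsWithin] with s hsV hs0
    refine ⟨hsV.1, fun hsF => hsV.2 ⟨hsF, hs0⟩⟩
  -- the regular part Q and the model function R
  set Q : ℂ → ℂ := fun s => mellin g s + mellin h s
    + ∑ m ∈ Finset.range n, (A m : ℂ) * (1 / (s + ((i m : ℝ) : ℂ))) with hQdef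
  set R : ℂ → ℂ := fun s =>
    (Complex.Gamma s)⁻¹ * ((s + ((i n : ℝ) : ℂ)) * Q s + (A n : ℂ)) with hRdef
  have hWR : ∀ s : ℂ, s ≠ s₀ → (s + ((i n : ℝ) : ℂ)) * W s = R s := by
    intro s hs
    have hne : s + ((i n : ℝ) : ℂ) ≠ 0 := by
      intro h0
      apply hs
      rw [hs₀def]
      push_cast
      exact eq_neg_of_add_eq_zero_left h0
    have hcancel : (s + ((i n : ℝ) : ℂ)) * ((A n : ℂ) * (1 / (s + ((i n : ℝ) : ℂ))))
        = (A n : ℂ) := by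
      field_simp
    rw [hWdef, hRdef, hQdef]
    simp only [Finset.sum_range_succ]
    calc (s + ((i n : ℝ) : ℂ)) * ((Complex.Gamma s)⁻¹ *
          (mellin g s + mellin h s
            + (∑ m ∈ Finset.range n, (A m : ℂ) * (1 / (s + ((i m : ℝ) : ℂ)))
              + (A n : ℂ) * (1 / (s + ((i n : ℝ) : ℂ))))))
        = (Complex.Gamma s)⁻¹ * ((s + ((i n : ℝ) : ℂ)) *
            (mellin g s + mellin h s
              + ∑ m ∈ Finset.range n, (A m : ℂ) * (1 / (s + ((i m : ℝ) : ℂ))))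
            + (s + ((i n : ℝ) : ℂ)) * ((A n : ℂ) * (1 / (s + ((i n : ℝ) : ℂ))))) := by ring
      _ = (Complex.Gamma s)⁻¹ * ((s + ((i n : ℝ) : ℂ)) *
            (mellin g s + mellin h s
              + ∑ m ∈ Finset.range n, (A m : ℂ) * (1 / (s + ((i m : ℝ) : ℂ))))
            + (A n : ℂ)) := by rw [hcancel]
  have hQdiffAt : DifferentiableAt ℂ Q s₀ := by
    rw [hQdef]
    refine ((hGdiff s₀ ?_).add (hHdiff s₀)).add (DifferentiableAt.fun_sum ?_)
    · rw [hs₀re]; linarith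
    · intro m hm
      have hmn : m < n := Finset.mem_range.1 hm
      have himn : i m < i n := hmono hmn
      have hne : s₀ + ((i m : ℝ) : ℂ) ≠ 0 := by
        rw [hs₀def]
        intro h0
        rw [← Complex.ofReal_add] at h0
        have := Complex.ofReal_eq_zero.1 h0
        linarith
      exact (differentiableAt_const _).mul
        ((differentiableAt_const _).div (differentiableAt_id.add_const _) hne)
  have hRcont : ContinuousAt R s₀ := by
    rw [hRdef]
    apply ContinuousAt.mul
    · exact (Complex.differentiable_one_div_Gamma s₀).continuousAt
    · exact (((differentiableAt_id.add_const _).mul hQdiffAt).add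
        (differentiableAt_const _)).continuousAt
  have hadd0 : s₀ + ((i n : ℝ) : ℂ) = 0 := by
    rw [hs₀def]; push_cast; ring
  have hR0 : R s₀ = ((A n / Real.Gamma (-(i n)) : ℝ) : ℂ) := by
    rw [hRdef]
    simp only [hadd0, zero_mul, zero_add]
    rw [hs₀def, Complex.Gamma_ofReal, Complex.ofReal_div, div_eq_inv_mul]
  have htendW : Tendsto (fun s : ℂ => (s + ((i n : ℝ) : ℂ)) * W s) (𝓝[≠] s₀)
      (𝓝 (((A n / Real.Gamma (-(i n)) : ℝ) : ℂ))) := by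
    rw [← hR0]
    apply Tendsto.congr' _ (hRcont.tendsto.mono_left nhdsWithin_le_nhds)
    filter_upwards [self_mem_nhdsWithin] with s hs
    exact (hWR s hs).symm
  apply Tendsto.congr' _ htendW
  filter_upwards [hmemU] with s hsU
  rw [hZWU hsU]
end

section
/- Under the same assumptions (Θ(t) ~ ∑_{n≥0} A_{i_n} t^{i_n} as t → 0⁺), for every nonnegative integer n that appears as an exponent (i.e. the coefficient A_n is defined, taken as 0 if n is not among the i_k), the meromorphic continuation of ζ_Λ satisfies ζ_Λ(-n) = (-1)^n · n! · A_n. -/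
/-!
Split `Θ(t) = ∑_{m<N} A_m t^{i_m} 𝟙_{(0,1]}(t) + r_N(t)`. The Mellin transform of the first part
is `∑_{m<N} A_m / (s + i_m)`, and `r_N = O(t^{i_N})` at `0` and decays exponentially, so its
Mellin transform is holomorphic on `Re s > -i_N`. Hence
`ζ_Λ(s) = Γ(s)⁻¹ (∑_{m<N} A_m / (s + i_m) + M[r_N](s))` on that half-plane minus the poles,
by the identity theorem. Choosing `i_N > n`, at `s = -n` the factor `Γ(s)⁻¹` kills everything
except the simple pole at `i_m = n`, where `Γ(s)⁻¹ / (s + n) → (-1)ⁿ n!`, the derivative of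
`1/Γ` at `-n`.
-/

open Real Filter Asymptotics Topology

open Finset

theorem Complex.inv_Gamma_eq_ascPochhammer_eval_mul (n : ℕ) (s : ℂ) :
    (Complex.Gamma s)⁻¹ = (ascPochhammer ℂ n).eval s * (Complex.Gamma (s + n))⁻¹ := by
  induction n with
  | zero => simp
  | succ n ih =>
    rw [ih, Complex.one_div_Gamma_eq_self_mul_one_div_Gamma_add_one (s + n),
      ascPochhammer_succ_eval]
    push_cast
    ring_nf

theorem Complex.hasDerivAt_inv_Gamma_neg_nat (n : ℕ) :
    HasDerivAt (fun s => (Complex.Gamma s)⁻¹) ((-1) ^ n * n.factorial) (-n) := by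
  set ψ : ℂ → ℂ := fun s => (ascPochhammer ℂ n).eval s * (Complex.Gamma (s + (n + 1)))⁻¹
  have hfac : (fun s => (Complex.Gamma s)⁻¹) = fun s => (s + n) * ψ s := by
    funext s
    rw [inv_Gamma_eq_ascPochhammer_eval_mul n, one_div_Gamma_eq_self_mul_one_div_Gamma_add_one]
    simp only [ψ, add_assoc]
    ring
  have hψ : ψ (-n) = (-1) ^ n * n.factorial := by
    simp [ψ, ascPochhammer_eval_neg_eq_descPochhammer, descPochhammer_eval_eq_descFactorial,
      Nat.descFactorial_self]
  have hψd : DifferentiableAt ℂ ψ (-n) := (Polynomial.differentiable _ _).mul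
    (differentiable_one_div_Gamma.comp (differentiable_id.add_const _) _)
  rw [hfac]
  simpa [hψ] using ((hasDerivAt_id (-n : ℂ)).add_const (n : ℂ)).fun_mul hψd.hasDerivAt

theorem eq_of_eventuallyEq_inv_Gamma_mul_div_add {Z H : ℂ → ℂ} {n : ℕ} {c : ℂ}
    (hZ : ContinuousAt Z (-n)) (hH : ContinuousAt H (-n))
    (h : Z =ᶠ[𝓝[≠] (-n : ℂ)] fun s => (Complex.Gamma s)⁻¹ * (c / (s + n) + H s)) :
    Z (-n) = (-1) ^ n * n.factorial * c := by
  have hslope := (Complex.hasDerivAt_inv_Gamma_neg_nat n).tendsto_slope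
  have hinv : Tendsto (fun s => (Complex.Gamma s)⁻¹) (𝓝[≠] (-n : ℂ)) (𝓝 0) := by
    simpa [Complex.Gamma_neg_nat_eq_zero] using
      (Complex.differentiable_one_div_Gamma.continuous.tendsto (-n : ℂ)).mono_left
        nhdsWithin_le_nhds
  have hlim : Tendsto (fun s => (Complex.Gamma s)⁻¹ * (c / (s + n) + H s)) (𝓝[≠] (-n : ℂ))
      (𝓝 ((-1) ^ n * n.factorial * c + 0 * H (-n))) := by
    refine ((hslope.mul_const c).add (hinv.mul (hH.tendsto.mono_left nhdsWithin_le_nhds))).congr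
      fun s => ?_
    simp only [slope_def_field, Complex.Gamma_neg_nat_eq_zero, inv_zero, sub_zero,
      sub_neg_eq_add]
    ring
  simpa using tendsto_nhds_unique (hZ.tendsto.mono_left nhdsWithin_le_nhds) (hlim.congr' h.symm)

theorem eq_of_eventuallyEq_inv_Gamma_mul_sum_div_add {Z G : ℂ → ℂ} {a : ℕ → ℂ} {e : ℕ → ℝ}
    {N n : ℕ} (hZ : ContinuousAt Z (-n)) (hG : ContinuousAt G (-n))
    (h : Z =ᶠ[𝓝[≠] (-n : ℂ)]
      fun s => (Complex.Gamma s)⁻¹ * (∑ m ∈ range N, a m / (s + e m) + G s)) :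
    Z (-n) = (-1) ^ n * n.factorial * ∑ m ∈ range N with e m = n, a m := by
  refine eq_of_eventuallyEq_inv_Gamma_mul_div_add hZ
    (H := fun s => ∑ m ∈ range N with e m ≠ n, a m / (s + e m) + G s) ?_ (h.trans (.of_eq ?_))
  · refine ContinuousAt.add (tendsto_finsetSum _ fun m hm => continuousAt_const.div
      (continuousAt_id.add continuousAt_const) ?_) hG
    have hm : e m ≠ n := (mem_filter.1 hm).2
    contrapose! hm
    exact_mod_cast (neg_add_eq_zero.1 hm).symm
  · funext s
    rw [← sum_filter_add_sum_filter_not (range N) (fun m => e m = n), sum_div, add_assoc]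
    congr 2
    refine sum_congr rfl fun m hm => ?_
    rw [(mem_filter.1 hm).2]
    norm_cast

theorem isPreconnected_re_gt_diff_of_countable {S : Set ℂ} (hS : S.Countable) (c : ℝ) :
    IsPreconnected ({s : ℂ | c < s.re} \ S) := by
  set φ : ℂ → ℂ := fun z => ((c + Real.exp z.re : ℝ) : ℂ) + z.im * Complex.I
  have hφ : Continuous φ := by fun_prop
  have hφre (z : ℂ) : (φ z).re = c + Real.exp z.re := by simp [φ, -Complex.ofReal_add]
  have hφim (z : ℂ) : (φ z).im = z.im := by simp [φ, -Complex.ofReal_add]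
  have hinj : Function.Injective φ := fun z w h => Complex.ext
    (by simpa [hφre] using congrArg Complex.re h) (by simpa [hφim] using congrArg Complex.im h)
  have hrange : Set.range φ = {s : ℂ | c < s.re} := by
    ext s
    refine ⟨?_, fun hs => ⟨⟨Real.log (s.re - c), s.im⟩, Complex.ext ?_ ?_⟩⟩
    · rintro ⟨z, rfl⟩
      simp [hφre, Real.exp_pos]
    · simp [hφre, Real.exp_log (sub_pos.2 hs)]
    · simp [hφim]
  rw [← hrange, ← Set.image_compl_preimage]
  exact ((hS.preimage hinj).isConnected_compl_of_one_lt_rank (by simp)).isPreconnected.image _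
    hφ.continuousOn

section Continuation

variable {Z G : ℂ → ℂ} {a : ℕ → ℂ} {e : ℕ → ℝ} {N : ℕ} {b c : ℝ}

theorem eqOn_inv_Gamma_mul_sum_div_add (hG : DifferentiableOn ℂ G {s | b < s.re})
    (hZ : AnalyticOnNhd ℂ Z ({s | b < s.re} \ (fun m => -(e m : ℂ)) '' Set.Iio N))
    (hec : ∀ m < N, -e m ≤ c)
    (hZeq : ∀ s : ℂ, c < s.re →
      Z s = (Complex.Gamma s)⁻¹ * (∑ m ∈ range N, a m / (s + e m) + G s)) :
    Set.EqOn Z (fun s => (Complex.Gamma s)⁻¹ * (∑ m ∈ range N, a m / (s + e m) + G s))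
      ({s | b < s.re} \ (fun m => -(e m : ℂ)) '' Set.Iio N) := by
  have hpoles : ((fun m => -(e m : ℂ)) '' Set.Iio N).Finite := (Set.finite_Iio N).image _
  obtain ⟨x₀, hbx, hcx⟩ : ∃ x : ℝ, b < x ∧ c < x :=
    ⟨max b c + 1, by linarith [le_max_left b c], by linarith [le_max_right b c]⟩
  refine hZ.eqOn_of_preconnected_of_eventuallyEq (z₀ := x₀) ?_
    (isPreconnected_re_gt_diff_of_countable hpoles.countable b) ?_ ?_
  · refine DifferentiableOn.analyticOnNhd (fun s hs => DifferentiableAt.differentiableWithinAt ?_)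
      ((Complex.isOpen_re_gt b).sdiff hpoles.isClosed)
    refine (Complex.differentiable_one_div_Gamma s).mul ((DifferentiableAt.fun_sum fun m hm =>
      (differentiableAt_const _).div (differentiableAt_id.add_const _) ?_).add
        (hG.differentiableAt ((Complex.isOpen_re_gt b).mem_nhds hs.1)))
    intro hsm
    exact hs.2 ⟨m, mem_range.1 hm, (eq_neg_of_add_eq_zero_left hsm).symm⟩
  · refine ⟨by simpa using hbx, ?_⟩
    rintro ⟨m, hm, hm'⟩
    have hre := congrArg Complex.re hm'
    simp only [Complex.neg_re, Complex.ofReal_re] at hre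
    linarith [hec m hm]
  · filter_upwards [(Complex.isOpen_re_gt c).mem_nhds (by simpa using hcx)] with s hs
    exact hZeq s hs

theorem apply_neg_nat_eq_of_eq_inv_Gamma_mul_sum_div_add {n : ℕ} (hbn : b < -n)
    (hG : DifferentiableOn ℂ G {s | b < s.re})
    (hZ : AnalyticOnNhd ℂ Z ({s | b < s.re} \ (fun m => -(e m : ℂ)) '' Set.Iio N))
    (hZn : ContinuousAt Z (-n)) (hec : ∀ m < N, -e m ≤ c)
    (hZeq : ∀ s : ℂ, c < s.re →
      Z s = (Complex.Gamma s)⁻¹ * (∑ m ∈ range N, a m / (s + e m) + G s)) :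
    Z (-n) = (-1) ^ n * n.factorial * ∑ m ∈ range N with e m = n, a m := by
  have hn : {s : ℂ | b < s.re} ∈ 𝓝 (-n : ℂ) := (Complex.isOpen_re_gt b).mem_nhds (by simpa)
  refine eq_of_eventuallyEq_inv_Gamma_mul_sum_div_add hZn (hG.differentiableAt hn).continuousAt ?_
  filter_upwards [nhdsNE_of_nhdsNE_sdiff_finite (mem_nhdsWithin_of_mem_nhds hn)
    ((Set.finite_Iio N).image (fun m => -(e m : ℂ))).to_subtype] with s hs
  exact eqOn_inv_Gamma_mul_sum_div_add hG hZ hec hZeq hs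

end Continuation

theorem hasMellin_sum {ι E : Type*} [NormedAddCommGroup E] [NormedSpace ℂ E] {f : ι → ℝ → E}
    {M : ι → E} {s : ℂ} (F : Finset ι) (hf : ∀ i ∈ F, HasMellin (f i) s (M i)) :
    HasMellin (fun t => ∑ i ∈ F, f i t) s (∑ i ∈ F, M i) := by
  refine ⟨?_, ?_⟩
  · simpa only [MellinConvergent, MeasureTheory.IntegrableOn, smul_sum] using
      MeasureTheory.integrable_finsetSum F fun i hi => (hf i hi).1
  · rw [mellin]
    simp only [smul_sum]
    rw [MeasureTheory.integral_finsetSum F fun i hi => (hf i hi).1]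
    exact sum_congr rfl fun i hi => (hf i hi).2

/-- Cutting the powers off at `t = 1` keeps their Mellin transforms `a_m / (s + e_m)` convergent
and leaves the decay of `θ` at `∞` intact. -/
noncomputable def expansionRemainder (θ : ℝ → ℂ) (a : ℕ → ℂ) (e : ℕ → ℝ) (N : ℕ) (t : ℝ) : ℂ :=
  θ t - ∑ m ∈ range N, a m * (Set.Ioc 0 1).indicator (fun t : ℝ => (t : ℂ) ^ (e m : ℂ)) t

section ExpansionRemainder

variable {θ : ℝ → ℂ} {a : ℕ → ℂ} {e : ℕ → ℝ} {N : ℕ}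

theorem mellin_eq_sum_add_mellin_expansionRemainder {s : ℂ}
    (hr : MellinConvergent (expansionRemainder θ a e N) s) (hs : ∀ m < N, -e m < s.re) :
    mellin θ s = ∑ m ∈ range N, a m / (s + e m) + mellin (expansionRemainder θ a e N) s := by
  have hpow : HasMellin (fun t => ∑ m ∈ range N,
      a m * (Set.Ioc 0 1).indicator (fun t : ℝ => (t : ℂ) ^ (e m : ℂ)) t) s
      (∑ m ∈ range N, a m / (s + e m)) := by
    refine hasMellin_sum _ fun m hm => ?_
    have h := hasMellin_cpow_Ioc (e m : ℂ) (s := s) (by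
      rw [Complex.ofReal_re]; linarith [hs m (mem_range.1 hm)])
    simpa [div_eq_mul_inv, h.2] using hasMellin_const_smul h.1 (a m)
  have h := hasMellin_add hr hpow.1
  simp only [expansionRemainder, sub_add_cancel] at h
  rw [h.2, hpow.2, add_comm]

theorem expansionRemainder_eventuallyEq_atTop : expansionRemainder θ a e N =ᶠ[atTop] θ := by
  filter_upwards [eventually_gt_atTop 1] with t ht
  simp [expansionRemainder, Set.indicator_of_notMem (fun h : t ∈ Set.Ioc 0 1 => ht.not_ge h.2)]

theorem locallyIntegrableOn_expansionRemainder
    (hθ : MeasureTheory.LocallyIntegrableOn θ (Set.Ioi 0)) :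
    MeasureTheory.LocallyIntegrableOn (expansionRemainder θ a e N) (Set.Ioi 0) := by
  set g : ℝ → ℂ := fun t => ∑ m ∈ range N, a m * (t : ℂ) ^ (e m : ℂ)
  have hg : ContinuousOn g (Set.Ioi 0) := continuousOn_finsetSum _ fun m _ =>
    continuousOn_const.mul fun t ht =>
      (Complex.continuousAt_ofReal_cpow_const t _ (Or.inr ht.ne')).continuousWithinAt
  have hsum : (fun t => ∑ m ∈ range N,
      a m * (Set.Ioc 0 1).indicator (fun t : ℝ => (t : ℂ) ^ (e m : ℂ)) t) =
      (Set.Ioc 0 1).indicator g := by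
    funext t
    by_cases ht : t ∈ Set.Ioc 0 1 <;> simp [g, ht]
  refine hθ.sub ?_
  rw [hsum]
  exact (hg.locallyIntegrableOn measurableSet_Ioi).mono
    ((by fun_prop : Measurable g).indicator measurableSet_Ioc).aestronglyMeasurable
    (.of_forall fun t => norm_indicator_le_norm_self g t)

theorem isBigO_expansionRemainder_ofReal {θ : ℝ → ℝ} {a : ℕ → ℝ} {g : ℝ → ℝ}
    (h : (fun t => θ t - ∑ m ∈ range N, a m * t ^ e m) =O[𝓝[>] 0] g) :
    expansionRemainder (fun t => (θ t : ℂ)) (fun m => (a m : ℂ)) e N =O[𝓝[>] 0] g := by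
  refine (Complex.isBigO_ofReal_left.2 h).congr' ?_ .rfl
  filter_upwards [Ioc_mem_nhdsGT zero_lt_one] with t ht
  simp [expansionRemainder, Set.indicator_of_mem ht, Complex.ofReal_cpow ht.1.le]

variable {c : ℝ} (hc : 0 < c) (hθ : MeasureTheory.LocallyIntegrableOn θ (Set.Ioi 0))
  (htop : θ =O[atTop] fun t => exp (-c * t))
  (hbot : expansionRemainder θ a e N =O[𝓝[>] 0] (· ^ e N))
include hc hθ htop hbot

theorem mellinConvergent_expansionRemainder {s : ℂ} (hs : -e N < s.re) :
    MellinConvergent (expansionRemainder θ a e N) s :=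
  mellinConvergent_of_isBigO_rpow_exp hc (locallyIntegrableOn_expansionRemainder hθ)
    (htop.congr' expansionRemainder_eventuallyEq_atTop.symm .rfl) (by simpa using hbot) hs

theorem differentiableOn_mellin_expansionRemainder :
    DifferentiableOn ℂ (mellin (expansionRemainder θ a e N)) {s | -e N < s.re} := fun s hs =>
  (mellin_differentiableAt_of_isBigO_rpow_exp hc (locallyIntegrableOn_expansionRemainder hθ)
    (htop.congr' expansionRemainder_eventuallyEq_atTop.symm .rfl) (by simpa using hbot)
    hs).differentiableWithinAt

end ExpansionRemainder

section ExpSum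

variable {Λ : ℕ → ℝ} (hsum : ∀ t : ℝ, 0 < t → Summable fun k => exp (-Λ k * t))
include hsum

theorem continuousOn_tsum_exp_neg_mul (hΛ : ∀ k, 0 ≤ Λ k) :
    ContinuousOn (fun t => ∑' k, exp (-Λ k * t)) (Set.Ioi 0) := by
  intro t ht
  have hcont : ContinuousOn (fun t => ∑' k, exp (-Λ k * t)) (Set.Ici (t / 2)) := by
    refine continuousOn_tsum (fun k => by fun_prop) (hsum _ (half_pos ht)) fun k x hx => ?_
    rw [Real.norm_of_nonneg (exp_pos _).le, exp_le_exp]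
    nlinarith [hΛ k, Set.mem_Ici.1 hx]
  exact (hcont.continuousAt (Ici_mem_nhds (half_lt_self ht))).continuousWithinAt

theorem isBigO_tsum_exp_neg_mul_atTop {δ : ℝ} (hδ : ∀ k, δ ≤ Λ k) :
    (fun t => ∑' k, exp (-Λ k * t)) =O[atTop] fun t => exp (-δ * t) := by
  refine IsBigO.of_bound ((∑' k, exp (-Λ k * 1)) * exp δ) ?_
  filter_upwards [eventually_ge_atTop 1] with t ht
  rw [Real.norm_of_nonneg (tsum_nonneg fun k => (exp_pos _).le),
    Real.norm_of_nonneg (exp_pos _).le, mul_assoc, ← exp_add, ← tsum_mul_right]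
  refine (hsum t (by linarith)).tsum_le_tsum (fun k => ?_) ((hsum 1 one_pos).mul_right _)
  rw [← exp_add, exp_le_exp]
  nlinarith [hδ k]

end ExpSum

theorem zeta_lambda_special_values_general (Λ : ℕ → ℕ) (hpos : ∀ k, 1 ≤ Λ k)
    (hsum : ∀ t : ℝ, 0 < t → Summable fun k => Real.exp (-(Λ k : ℝ) * t))
    (i : ℕ → ℝ) (A : ℕ → ℝ) (hmono : StrictMono i)
    (hitop : Tendsto i atTop atTop)
    (hasymp : ∀ N : ℕ,
      (fun t : ℝ => (∑' k, Real.exp (-(Λ k : ℝ) * t)) -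
          ∑ n ∈ Finset.range N, A n * t ^ (i n))
        =O[nhdsWithin 0 (Set.Ioi 0)] fun t : ℝ => t ^ (i N))
    (Z : ℂ → ℂ)
    (hZ : ∀ s : ℂ, -(i 0) < s.re →
      Z s = (Complex.Gamma s)⁻¹ *
        ∫ t in Set.Ioi (0 : ℝ),
          (t : ℂ) ^ (s - 1) * ((∑' k, Real.exp (-(Λ k : ℝ) * t) : ℝ) : ℂ))
    (hZanalytic : ∀ s : ℂ, (∀ n, s ≠ (-(i n) : ℝ)) → AnalyticAt ℂ Z s)
    (hZreg : ∀ n : ℕ, AnalyticAt ℂ Z (-(n : ℂ))) :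
    ∀ n : ℕ,
      (∀ k : ℕ, i k = (n : ℝ) → Z (-(n : ℂ)) = (-1) ^ n * (n.factorial : ℂ) * (A k : ℂ)) ∧
      ((∀ k : ℕ, i k ≠ (n : ℝ)) → Z (-(n : ℂ)) = 0) := by
  intro n
  obtain ⟨N, hN⟩ := (hitop.eventually_gt_atTop (n : ℝ)).exists
  set θ : ℝ → ℂ := fun t => ((∑' k, Real.exp (-(Λ k : ℝ) * t) : ℝ) : ℂ)
  have hθ : MeasureTheory.LocallyIntegrableOn θ (Set.Ioi 0) :=
    (Complex.continuous_ofReal.comp_continuousOn (continuousOn_tsum_exp_neg_mul hsum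
      fun k => (Λ k).cast_nonneg)).locallyIntegrableOn measurableSet_Ioi
  have htop : θ =O[atTop] fun t => exp (-1 * t) := Complex.isBigO_ofReal_left.2
    (isBigO_tsum_exp_neg_mul_atTop hsum fun k => by exact_mod_cast hpos k)
  have hbot := isBigO_expansionRemainder_ofReal (hasymp N)
  have hpoles (m : ℕ) : -i m ≤ -i 0 := neg_le_neg (hmono.monotone m.zero_le)
  have hvalue : Z (-n) = (-1) ^ n * n.factorial * ∑ m ∈ range N with i m = n, (A m : ℂ) := by
    refine apply_neg_nat_eq_of_eq_inv_Gamma_mul_sum_div_add (b := -i N) (by simpa using hN)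
      (differentiableOn_mellin_expansionRemainder one_pos hθ htop hbot) ?_ (hZreg n).continuousAt
      (fun m _ => hpoles m) fun s hs => ?_
    · rintro s ⟨hs, hsN⟩
      refine hZanalytic s fun m hm => ?_
      rcases lt_or_ge m N with hmN | hmN
      · exact hsN ⟨m, hmN, by rw [hm]; push_cast; rfl⟩
      · have hre := congrArg Complex.re hm
        simp only [Complex.ofReal_re] at hre
        linarith [hmono.monotone hmN, show -i N < s.re from hs]
    · rw [hZ s hs, ← mellin_eq_sum_add_mellin_expansionRemainder
        (mellinConvergent_expansionRemainder one_pos hθ htop hbot (by linarith [hpoles N]))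
        fun m _ => (hpoles m).trans_lt hs]
      rfl
  refine ⟨fun k hk => ?_, fun hk => ?_⟩
  · have hkN : k < N := hmono.lt_iff_lt.1 (hk ▸ hN)
    rw [hvalue, sum_eq_single_of_mem k (mem_filter.2 ⟨mem_range.2 hkN, hk⟩) fun m hm hmk =>
      (hmk (hmono.injective ((mem_filter.1 hm).2.trans hk.symm))).elim]
  · rw [hvalue, sum_eq_zero fun m hm => (hk m (mem_filter.1 hm).2).elim, mul_zero]

/-- Special values of the zeta function associated to a sequence `Λ` of positive
integers: under the same assumptions as for the residues (partition function
`Θ(t) = ∑_k e^{-Λ_k t}` with full asymptotic expansion `Θ(t) ~ ∑_n A_n t^{i_n}` as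
`t → 0⁺`), the meromorphic continuation `Z` of
`ζ_Λ(s) = (1/Γ(s)) ∫₀^∞ t^{s-1} Θ(t) dt` satisfies, for every nonnegative integer `n`,
`ζ_Λ(-n) = (-1)^n n! A_n`, where `A_n` is the coefficient of `t^n` in the expansion
(taken to be `0` if `n` does not occur among the exponents). -/
theorem zeta_lambda_special_values (Λ : ℕ → ℕ) (hpos : ∀ k, 1 ≤ Λ k)
    (hsum : ∀ t : ℝ, 0 < t → Summable fun k => Real.exp (-(Λ k : ℝ) * t))
    (i : ℕ → ℝ) (A : ℕ → ℝ) (hmono : StrictMono i) (hi0 : i 0 < 0)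
    (hitop : Tendsto i atTop atTop)
    (hasymp : ∀ N : ℕ,
      (fun t : ℝ => (∑' k, Real.exp (-(Λ k : ℝ) * t)) -
          ∑ n ∈ Finset.range N, A n * t ^ (i n))
        =O[nhdsWithin 0 (Set.Ioi 0)] fun t : ℝ => t ^ (i N))
    (Z : ℂ → ℂ)
    (hZ : ∀ s : ℂ, -(i 0) < s.re →
      Z s = (Complex.Gamma s)⁻¹ *
        ∫ t in Set.Ioi (0 : ℝ),
          (t : ℂ) ^ (s - 1) * ((∑' k, Real.exp (-(Λ k : ℝ) * t) : ℝ) : ℂ))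
    (hZanalytic : ∀ s : ℂ, (∀ n, s ≠ (-(i n) : ℝ)) → AnalyticAt ℂ Z s)
    (hZreg : ∀ n : ℕ, AnalyticAt ℂ Z (-(n : ℂ))) :
    ∀ n : ℕ,
      (∀ k : ℕ, i k = (n : ℝ) → Z (-(n : ℂ)) = (-1) ^ n * (n.factorial : ℂ) * (A k : ℂ)) ∧
      ((∀ k : ℕ, i k ≠ (n : ℝ)) → Z (-(n : ℂ)) = 0) :=
  zeta_lambda_special_values_general Λ hpos hsum i A hmono hitop hasymp Z hZ hZanalytic hZreg
end

section
/- For a > 0 and a set Λ of positive integers with ζ_Λ(t) absolutely convergent for Re t > μ₀, and σ > max(μ₀, 1), one has log ∏_{λ∈Λ}(1-e^{-aλ})^{-1} = ∑_{λ∈Λ}∑_{l≥1} e^{-aλl}/l = (1/2πi)∫_{σ-i∞}^{σ+i∞} a^{-t} ζ_Λ(t) ζ(t+1) Γ(t) dt. -/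
/-!
Both sides equal `∑_{λ, l} e^{-aλl}/l`. For the logarithm this is `-log (1 - x) = ∑ xˡ/l` at
`x = e^{-aλ}`. For the integral, Mellin inversion of `Γ(t) = ∫₀^∞ e^{-x} x^{t-1} dx` gives
`e^{-x} = (1/2πi) ∫_{(σ)} x^{-t} Γ(t) dt`. On the line `Re t = σ > 1` the product
`a^{-t} ζ_Λ(t) ζ(t+1)` is the absolutely convergent series `∑_{λ,l} l⁻¹ (aλl)^{-t}`, and since
`Γ` decays like `|t|⁻²` along vertical lines, it may be integrated term by term.
-/

open Complex Real MeasureTheory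

namespace Complex

lemma norm_Gamma_le_Gamma_re_s15 {s : ℂ} (hs : 0 < s.re) : ‖Gamma s‖ ≤ Real.Gamma s.re := by
  rw [Gamma_eq_integral hs, Real.Gamma_eq_integral hs, GammaIntegral]
  refine (norm_integral_le_integral_norm _).trans_eq (setIntegral_congr_fun measurableSet_Ioi
    fun x hx => ?_)
  simp [norm_exp, norm_cpow_eq_rpow_re_of_pos (Set.mem_Ioi.mp hx)]

lemma continuous_Gamma_vertical {σ : ℝ} (hσ : 0 < σ) :
    Continuous fun y : ℝ => Gamma (σ + y * I) := by
  refine continuous_iff_continuousAt.mpr fun y => ((differentiableAt_Gamma _ fun m h => ?_)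
    |>.continuousAt.comp (by fun_prop))
  have := congrArg re h
  simp only [add_re, ofReal_re, mul_re, I_re, mul_zero, ofReal_im, I_im, mul_one, sub_self,
    add_zero, neg_re, natCast_re] at this
  linarith [(m.cast_nonneg : (0 : ℝ) ≤ m)]

/-- From `Γ(s + 2) = s (s + 1) Γ(s)` and `|Γ(s + 2)| ≤ Γ(σ + 2)`. -/
lemma norm_Gamma_vertical_le {σ : ℝ} (hσ : 0 < σ) (y : ℝ) :
    ‖Gamma (σ + y * I)‖ ≤ Real.Gamma (σ + 2) / min (σ ^ 2) 1 * (1 + y ^ 2)⁻¹ := by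
  set s : ℂ := σ + y * I
  have hs0 : s ≠ 0 := fun h => by simpa [s, hσ.ne'] using congrArg re h
  have hs1 : s + 1 ≠ 0 := fun h => by
    have := congrArg re h
    simp [s] at this
    linarith
  have hnorm_s : ‖s‖ ^ 2 = σ ^ 2 + y ^ 2 := by rw [Complex.sq_norm, normSq_apply]; simp [s]; ring
  have hnorm_s1 : ‖s + 1‖ ^ 2 = (σ + 1) ^ 2 + y ^ 2 := by
    rw [Complex.sq_norm, normSq_apply]; simp [s]; ring
  have hle : ‖s‖ ≤ ‖s + 1‖ :=
    (pow_le_pow_iff_left₀ (norm_nonneg _) (norm_nonneg _) two_ne_zero).mp (by nlinarith)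
  have hΓ2 : ‖s‖ * ‖s + 1‖ * ‖Gamma s‖ ≤ Real.Gamma (σ + 2) := by
    have hre : (s + 2).re = σ + 2 := by simp [s]
    have := norm_Gamma_le_Gamma_re_s15 (s := s + 2) (by rw [hre]; linarith)
    rwa [hre, show s + 2 = s + 1 + 1 by ring, Gamma_add_one _ hs1, Gamma_add_one _ hs0,
      norm_mul, norm_mul, ← mul_assoc, mul_comm ‖s + 1‖] at this
  have hmin : min (σ ^ 2) 1 * (1 + y ^ 2) ≤ ‖s‖ * ‖s + 1‖ := by
    nlinarith [min_le_left (σ ^ 2) 1, min_le_right (σ ^ 2) 1, sq_nonneg y,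
      mul_le_mul_of_nonneg_left hle (norm_nonneg s)]
  have hpos : 0 < min (σ ^ 2) 1 * (1 + y ^ 2) := by positivity
  calc ‖Gamma s‖ ≤ Real.Gamma (σ + 2) / (min (σ ^ 2) 1 * (1 + y ^ 2)) :=
        (le_div_iff₀ hpos).mpr (by nlinarith [norm_nonneg (Gamma s)])
    _ = _ := by rw [div_mul_eq_div_div, div_eq_mul_inv _ (1 + y ^ 2)]

lemma integrable_Gamma_vertical {σ : ℝ} (hσ : 0 < σ) :
    Integrable fun y : ℝ => Gamma (σ + y * I) :=
  (integrable_inv_one_add_sq.const_mul _).mono' (continuous_Gamma_vertical hσ).aestronglyMeasurable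
    (.of_forall (norm_Gamma_vertical_le hσ))

/-- Mellin inversion of `Γ(s) = ∫₀^∞ e^{-x} x^{s-1} dx`. -/
lemma integral_cpow_neg_mul_Gamma_vertical {σ x : ℝ} (hσ : 0 < σ) (hx : 0 < x) :
    ∫ y : ℝ, (x : ℂ) ^ (-(σ + y * I)) * Gamma (σ + y * I) = 2 * π * Real.exp (-x) := by
  have hmellin (y : ℝ) :
      mellin (fun t : ℝ => (Real.exp (-t) : ℂ)) (σ + y * I) = Gamma (σ + y * I) := by
    rw [← GammaIntegral_eq_mellin, Gamma_eq_integral (by simpa using hσ)]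
  have hconv : MellinConvergent (fun t : ℝ => (Real.exp (-t) : ℂ)) σ :=
    (GammaIntegral_convergent (s := σ) (by simpa using hσ)).congr_fun
      (fun t _ => by simp [mul_comm]) measurableSet_Ioi
  have hinv := mellinInv_mellin_eq σ _ hx hconv
    ((integrable_Gamma_vertical hσ).congr (.of_forall fun y => (hmellin y).symm)) (by fun_prop)
  simp only [mellinInv, hmellin, smul_eq_mul, real_smul] at hinv
  rw [← hinv, ← mul_assoc, ← ofReal_ofNat, ← ofReal_mul, ← ofReal_mul,
    mul_one_div_cancel (by positivity), ofReal_one, one_mul]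

lemma norm_ofReal_cpow_neg_vertical {x : ℝ} (hx : 0 < x) (σ y : ℝ) :
    ‖(x : ℂ) ^ (-(σ + y * I))‖ = x ^ (-σ) := by
  simp [norm_cpow_eq_rpow_re_of_pos hx]

lemma integral_tsum_cpow_neg_mul_Gamma_vertical {ι : Type*} [Countable ι] {x : ι → ℝ}
    (hx : ∀ i, 0 < x i) {w : ι → ℂ} {σ : ℝ} (hσ : 0 < σ)
    (hw : Summable fun i => x i ^ (-σ) * ‖w i‖) :
    ∫ y : ℝ, (∑' i, (x i : ℂ) ^ (-(σ + y * I)) * w i) * Gamma (σ + y * I)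
      = 2 * π * ∑' i, (Real.exp (-x i) : ℂ) * w i := by
  set F : ι → ℝ → ℂ := fun i y => (x i : ℂ) ^ (-(σ + y * I)) * w i * Gamma (σ + y * I)
  have hnorm (i : ι) (y : ℝ) : ‖F i y‖ = x i ^ (-σ) * ‖w i‖ * ‖Gamma (σ + y * I)‖ := by
    simp only [F, norm_mul, norm_ofReal_cpow_neg_vertical (hx i)]
  have hF (i : ι) : Integrable (F i) := by
    refine ((integrable_Gamma_vertical hσ).norm.const_mul _).mono' ?_
      (.of_forall fun y => (hnorm i y).le)
    have hcpow : Continuous fun y : ℝ => (x i : ℂ) ^ (-(σ + y * I)) :=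
      (by fun_prop : Continuous fun y : ℝ => -((σ : ℂ) + y * I)).const_cpow
        (.inl (ofReal_ne_zero.mpr (hx i).ne'))
    exact ((hcpow.mul continuous_const).mul (continuous_Gamma_vertical hσ)).aestronglyMeasurable
  have hF_sum : Summable fun i => ∫ y, ‖F i y‖ := by
    simpa only [hnorm, integral_const_mul] using hw.mul_right (∫ y : ℝ, ‖Gamma (σ + y * I)‖)
  calc _ = ∫ y, ∑' i, F i y := by simp only [F, tsum_mul_right]
    _ = ∑' i, ∫ y, F i y := (integral_tsum_of_summable_integral_norm hF hF_sum).symm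
    _ = ∑' i, 2 * π * ((Real.exp (-x i) : ℂ) * w i) := tsum_congr fun i => by
      simp only [F, mul_right_comm _ (w i), integral_mul_const,
        integral_cpow_neg_mul_Gamma_vertical hσ (hx i)]
      ring
    _ = _ := tsum_mul_left

end Complex

lemma hasSum_exp_neg_mul_succ_div {x : ℝ} (hx : 0 < x) :
    HasSum (fun k : ℕ => Real.exp (-(x * (k + 1))) / (k + 1)) (-Real.log (1 - Real.exp (-x))) := by
  convert Real.hasSum_pow_div_log_of_abs_lt_one (x := Real.exp (-x))
    (by rwa [abs_of_pos (exp_pos _), exp_lt_one_iff, neg_lt_zero]) using 2 with k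
  rw [← Real.exp_nat_mul]
  push_cast
  ring_nf

section

variable {Λ : Set ℕ} {a : ℝ}

lemma summable_exp_neg_mul_mul_succ_div (hΛ : ∀ l ∈ Λ, 1 ≤ l) (ha : 0 < a) :
    Summable fun p : Λ × ℕ => Real.exp (-(a * p.1 * (p.2 + 1))) / (p.2 + 1) := by
  have hgeom : Summable fun n : ℕ => Real.exp (-(a * n)) :=
    (summable_exp_nat_mul_iff.mpr (neg_lt_zero.mpr ha)).congr fun n => by ring_nf
  refine .of_nonneg_of_le (fun p => by positivity) (fun ⟨l, k⟩ => ?_)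
    ((hgeom.subtype Λ).mul_of_nonneg hgeom (fun _ => (exp_pos _).le) fun _ => (exp_pos _).le)
  have hl : (1 : ℝ) ≤ l := by exact_mod_cast hΛ l l.2
  calc Real.exp (-(a * l * (k + 1))) / (k + 1) ≤ Real.exp (-(a * l * (k + 1))) :=
        div_le_self (exp_pos _).le (by linarith [(k.cast_nonneg : (0 : ℝ) ≤ k)])
    _ ≤ Real.exp (-(a * l)) * Real.exp (-(a * k)) := by
        rw [← Real.exp_add, exp_le_exp]
        nlinarith [mul_nonneg (mul_nonneg ha.le k.cast_nonneg) (sub_nonneg.mpr hl)]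

lemma log_tprod_inv_one_sub_exp (hΛ : ∀ l ∈ Λ, 1 ≤ l) (ha : 0 < a) :
    Real.log (∏' l : Λ, (1 - Real.exp (-(a * l)))⁻¹)
      = ∑' l : Λ, ∑' k : ℕ, Real.exp (-(a * l * (k + 1))) / (k + 1) := by
  have hal (l : Λ) : 0 < a * l := mul_pos ha (by exact_mod_cast hΛ l l.2)
  have hlog (l : Λ) : Real.log (1 - Real.exp (-(a * l)))⁻¹
      = ∑' k : ℕ, Real.exp (-(a * l * (k + 1))) / (k + 1) := by
    rw [Real.log_inv, (hasSum_exp_neg_mul_succ_div (hal l)).tsum_eq]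
  have hpos (l : Λ) : 0 < (1 - Real.exp (-(a * l)))⁻¹ :=
    inv_pos.mpr (sub_pos.mpr (exp_lt_one_iff.mpr (neg_lt_zero.mpr (hal l))))
  have hsum : Summable fun l : Λ => Real.log (1 - Real.exp (-(a * l)))⁻¹ := by
    simpa only [hlog] using (summable_exp_neg_mul_mul_succ_div hΛ ha).prod
  rw [← Real.rexp_tsum_eq_tprod hpos hsum, Real.log_exp, tsum_congr hlog]

lemma cpow_neg_mul_tsum_mul_riemannZeta_add_one (hΛ : ∀ l ∈ Λ, 1 ≤ l) (ha : 0 < a) {t : ℂ}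
    (ht : 0 < t.re) (hΛt : Summable fun l : Λ => ((l : ℕ) : ℝ) ^ (-t.re)) :
    (a : ℂ) ^ (-t) * (∑' l : Λ, ((l : ℕ) : ℂ) ^ (-t)) * riemannZeta (t + 1)
      = ∑' p : Λ × ℕ, ((a * p.1 * (p.2 + 1) : ℝ) : ℂ) ^ (-t) * ((p.2 : ℂ) + 1)⁻¹ := by
  have ht1 : 1 < (t + 1).re := by simpa using ht
  have hζ : Summable fun k : ℕ => ‖1 / ((k : ℂ) + 1) ^ (t + 1)‖ := by
    simpa using ((summable_nat_add_iff 1).mpr (Complex.summable_one_div_nat_cpow.mpr ht1)).norm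
  have hΛ' : Summable fun l : Λ => ‖((l : ℕ) : ℂ) ^ (-t)‖ :=
    hΛt.congr fun l => by rw [norm_natCast_cpow_of_pos (hΛ l l.2), neg_re]
  rw [zeta_eq_tsum_one_div_nat_add_one_cpow ht1, mul_assoc, tsum_mul_tsum_of_summable_norm hΛ' hζ,
    ← tsum_mul_left]
  refine tsum_congr fun ⟨l, k⟩ => ?_
  have hk : (k : ℂ) + 1 ≠ 0 := Nat.cast_add_one_ne_zero k
  rw [ofReal_mul, mul_cpow_ofReal_nonneg (by positivity) (by positivity), ofReal_mul,
    mul_cpow_ofReal_nonneg ha.le (Nat.cast_nonneg _), cpow_add _ _ hk, cpow_one]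
  push_cast
  simp only [cpow_neg]
  field_simp

lemma summable_rpow_neg_mul_mul_succ_div (ha : 0 < a) {σ : ℝ} (hσ : 1 < σ)
    (hΛσ : Summable fun l : Λ => ((l : ℕ) : ℝ) ^ (-σ)) :
    Summable fun p : Λ × ℕ => (a * p.1 * (p.2 + 1)) ^ (-σ) / (p.2 + 1) := by
  have hζ : Summable fun k : ℕ => ((k : ℝ) + 1) ^ (-σ) := by
    simpa using (summable_nat_add_iff 1).mpr (Real.summable_nat_rpow.mpr (neg_lt_neg hσ))
  refine .of_nonneg_of_le (fun p => by positivity) (fun ⟨l, k⟩ => ?_)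
    ((hΛσ.mul_left (a ^ (-σ))).mul_of_nonneg hζ (fun _ => by positivity) fun _ => by positivity)
  rw [mul_rpow (by positivity) (by positivity), mul_rpow ha.le (Nat.cast_nonneg _)]
  exact div_le_self (by positivity) (by linarith [(k.cast_nonneg : (0 : ℝ) ≤ k)])

end

/-- For `a > 0` and a set `Λ` of positive integers whose Dirichlet series converges
absolutely for `Re t > μ₀`, and `σ > max(μ₀, 1)`:
`log ∏_{λ∈Λ} (1-e^{-aλ})⁻¹ = ∑_{λ∈Λ} ∑_{l≥1} e^{-aλl}/l
  = (1/2πi) ∫_{σ-i∞}^{σ+i∞} a^{-t} ζ_Λ(t) ζ(t+1) Γ(t) dt`. -/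
theorem log_partition_product_mellin_barnes (Λ : Set ℕ) (hΛ : ∀ l ∈ Λ, 1 ≤ l)
    (μ₀ : ℝ) (habs : ∀ r : ℝ, μ₀ < r → Summable fun l : Λ => ((l : ℝ) ^ r)⁻¹)
    (a : ℝ) (ha : 0 < a) (σ : ℝ) (hσ : max μ₀ 1 < σ) :
    Real.log (∏' l : Λ, (1 - Real.exp (-(a * l)))⁻¹)
        = ∑' l : Λ, ∑' k : ℕ, Real.exp (-(a * l * (k + 1))) / (k + 1) ∧
    ((∑' l : Λ, ∑' k : ℕ, Real.exp (-(a * l * (k + 1))) / (k + 1) : ℝ) : ℂ)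
        = (2 * (π : ℂ) * I)⁻¹ *
          ∫ y : ℝ,
            (a : ℂ) ^ (-((σ : ℂ) + y * I)) *
              (∑' l : Λ, ((l : ℕ) : ℂ) ^ (-((σ : ℂ) + y * I))) *
              riemannZeta (((σ : ℂ) + y * I) + 1) *
              Complex.Gamma ((σ : ℂ) + y * I) * I := by
  refine ⟨log_tprod_inv_one_sub_exp hΛ ha, ?_⟩
  have hσ1 : 1 < σ := (le_max_right _ _).trans_lt hσ
  have hσ0 : 0 < σ := one_pos.trans hσ1
  have hΛσ : Summable fun l : Λ => ((l : ℕ) : ℝ) ^ (-σ) :=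
    (habs σ ((le_max_left _ _).trans_lt hσ)).congr fun l => (rpow_neg (Nat.cast_nonneg _) σ).symm
  have hx (p : Λ × ℕ) : 0 < a * p.1 * (p.2 + 1) := by
    have : (1 : ℝ) ≤ p.1 := by exact_mod_cast hΛ p.1 p.1.2
    positivity
  have hw : Summable fun p : Λ × ℕ => (a * p.1 * (p.2 + 1)) ^ (-σ) * ‖((p.2 : ℂ) + 1)⁻¹‖ :=
    (summable_rpow_neg_mul_mul_succ_div ha hσ1 hΛσ).congr fun p => by
      rw [norm_inv, div_eq_mul_inv]; norm_cast
  have hline (y : ℝ) :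
      (a : ℂ) ^ (-((σ : ℂ) + y * I)) * (∑' l : Λ, ((l : ℕ) : ℂ) ^ (-((σ : ℂ) + y * I))) *
          riemannZeta (((σ : ℂ) + y * I) + 1) * Gamma ((σ : ℂ) + y * I)
        = (∑' p : Λ × ℕ, ((a * p.1 * (p.2 + 1) : ℝ) : ℂ) ^ (-((σ : ℂ) + y * I)) *
            ((p.2 : ℂ) + 1)⁻¹) * Gamma ((σ : ℂ) + y * I) := by
    rw [cpow_neg_mul_tsum_mul_riemannZeta_add_one hΛ ha (by simpa using hσ0) (by simpa using hΛσ)]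
  rw [integral_mul_const, integral_congr_ae (.of_forall hline),
    integral_tsum_cpow_neg_mul_Gamma_vertical hx hσ0 hw,
    ← (summable_exp_neg_mul_mul_succ_div hΛ ha).tsum_prod, ofReal_tsum]
  push_cast
  field_simp
end
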